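/- arXiv:2511.01319 — 7 statements merged into one kernel-verified Lean document; each statement's English description precedes it below -/
import Mathlib

section
/- Let G be a connected graph of order m and let n be a positive integer. Then N_L(G×P_n) = n·N(G) + Σ_{k=2}^{n} (n−k+1)·(1^T · A^{k−1} · 1), where A is the transfer matrix of G and 1 is the all-ones column vector of length 2^m−1. -/
open SimpleGraph Finset
open scoped Classical

/-- A connected set of a graph: a nonempty vertex subset inducing a connected subgraph. -/
def IsConnSet {V : Type*} (G : SimpleGraph V) (C : Finset V) : Prop :=
  C.Nonempty ∧ (G.induce (C : Set V)).Connected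

/-- `N(G)`: the number of connected sets of `G`. -/
noncomputable def numConnSets {V : Type*} (G : SimpleGraph V) : ℕ :=
  {C : Finset V | IsConnSet G C}.ncard

/-- Membership in `C_L(G×P_n)`: a connected set `C` of `G×P_n` such that for any two
consecutive columns `X, Y` with `C∩X ≠ ∅` and `C∩Y ≠ ∅`, the set `C∩(X∪Y)` is a connected
set of `G×P_n`. -/
def IsCLSet {V : Type*} (G : SimpleGraph V) (n : ℕ) (C : Finset (V × Fin n)) : Prop :=
  IsConnSet (G □ pathGraph n) C ∧
  ∀ j j' : Fin n, (pathGraph n).Adj j j' →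
    (C.filter (fun p => p.2 = j)).Nonempty →
    (C.filter (fun p => p.2 = j')).Nonempty →
    IsConnSet (G □ pathGraph n) (C.filter (fun p => p.2 = j ∨ p.2 = j'))

/-- `N_L(G×P_n) = |C_L(G×P_n)|`. -/
noncomputable def NL {V : Type*} (G : SimpleGraph V) (n : ℕ) : ℕ :=
  {C : Finset (V × Fin n) | IsCLSet G n C}.ncard

/-!
A set in `C_L(G×P_n)` is connected, so it occupies a block of consecutive columns
`a, …, a + l`, and it is determined by its sequence of columns `S₀, …, Sₗ`, nonempty vertex
sets of `G`. For `l ≥ 1` the defining condition says exactly that each pair `(Sₜ, Sₜ₊₁)`,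
placed in `G×P_2`, is connected, i.e. that the transfer matrix has a `1` at that entry; these
pair conditions already make the whole set connected, since every vertex is joined through the
pair sets to a fixed vertex of column `a`. For `l = 0` the condition says that `S₀` is a connected
set of `G`. So there are `N(G)` such sets for `l = 0` and `1ᵀ Aˡ 1` (the number of walks of
length `l` in the digraph of `A`) for `l ≥ 1`, for each of the `n - l` possible first columns.
-/

section TransferMatrix

variable {ι R : Type*} [Fintype ι]

lemma Fintype.sum_fin_succ_pi {β : Type*} [AddCommMonoid β] {l : ℕ} (F : (Fin (l + 1) → ι) → β) :
    ∑ p, F p = ∑ i, ∑ q : Fin l → ι, F (Fin.cons i q) := by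
  rw [← Fintype.sum_prod_type']
  exact (Fintype.sum_equiv (Fin.consEquiv fun _ => ι) _ _ fun _ => rfl).symm

def Matrix.pathWeight [CommMonoid R] (M : Matrix ι ι R) {l : ℕ} (p : Fin (l + 1) → ι) : R :=
  ∏ t : Fin l, M (p t.castSucc) (p t.succ)

lemma Matrix.sum_pow_apply [DecidableEq ι] [CommSemiring R] (M : Matrix ι ι R) (l : ℕ) (i : ι) :
    ∑ j, (M ^ l) i j = ∑ q : Fin l → ι, M.pathWeight (Fin.cons i q : Fin (l + 1) → ι) := by
  induction l generalizing i with
  | zero => simp [Matrix.one_apply, Matrix.pathWeight]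
  | succ l ih =>
    simp_rw [pow_succ', Matrix.mul_apply]
    rw [sum_comm]
    simp_rw [← mul_sum, ih, mul_sum, Fintype.sum_fin_succ_pi, Matrix.pathWeight, Fin.prod_univ_succ]
    rfl

lemma Matrix.sum_sum_pow_apply_eq_card [DecidableEq ι] (r : ι → ι → Prop) (A : Matrix ι ι ℕ)
    (hA : ∀ i j, A i j = if r i j then 1 else 0) (l : ℕ) :
    ∑ i, ∑ j, (A ^ l) i j = #{p : Fin (l + 1) → ι | ∀ t : Fin l, r (p t.castSucc) (p t.succ)} := by
  simp_rw [Matrix.sum_pow_apply, ← Fintype.sum_fin_succ_pi, Matrix.pathWeight, hA, prod_boole]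
  simp

end TransferMatrix

lemma Finset.card_eq_sum_card_filter_of_existsUnique {α β : Type*} {s : Finset α} {t : Finset β}
    {P : α → β → Prop} (h : ∀ x ∈ s, ∃! k, k ∈ t ∧ P x k) :
    #s = ∑ k ∈ t, #{x ∈ s | P x k} := by
  simp_rw [card_eq_sum_ones s, card_filter]
  rw [sum_comm]
  refine sum_congr rfl fun x hx => ?_
  obtain ⟨k, ⟨hk, hPk⟩, huniq⟩ := h x hx
  rw [sum_eq_single_of_mem k hk fun k' hk' hne => if_neg fun hP => hne (huniq k' ⟨hk', hP⟩),
    if_pos hPk]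

lemma sum_range_tsub_mul_eq_add_sum_Icc (g : ℕ → ℕ) (n : ℕ) :
    ∑ l ∈ range n, (n - l) * g l = n * g 0 + ∑ k ∈ Icc 2 n, (n - k + 1) * g (k - 1) := by
  cases n with
  | zero => simp
  | succ n =>
    rw [sum_range_succ', add_comm, ← Finset.Ico_add_one_right_eq_Icc, sum_Ico_eq_sum_range]
    congr 1
    refine sum_congr (by simp) fun l hl => ?_
    rw [mem_range] at hl
    rw [show 2 + l - 1 = l + 1 by omega, show n + 1 - (2 + l) + 1 = n + 1 - (l + 1) by omega]

namespace SimpleGraph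

variable {V W V' W' : Type*} {G : SimpleGraph V} {H : SimpleGraph W}

lemma Embedding.connected_induce_image_iff (f : G ↪g H) (s : Set V) :
    (H.induce (f '' s)).Connected ↔ (G.induce s).Connected :=
  (Iso.connected_iff ⟨Equiv.Set.image f s f.injective, by simp⟩).symm

lemma Embedding.isConnSet_map_iff (f : G ↪g H) (C : Finset V) :
    IsConnSet H (C.map f.toEmbedding) ↔ IsConnSet G C := by
  rw [IsConnSet, IsConnSet, map_nonempty, coe_map]
  exact and_congr_right fun _ => f.connected_induce_image_iff _

def Embedding.boxProd {G' : SimpleGraph V'} {H' : SimpleGraph W'} (f : G ↪g G') (g : H ↪g H') :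
    (G □ H) ↪g (G' □ H') where
  toEmbedding := f.toEmbedding.prodMap g.toEmbedding
  map_rel_iff' := by simp [boxProd_adj]

def pathGraphShift {k n : ℕ} (a : ℕ) (h : a + k ≤ n) : pathGraph k ↪g pathGraph n where
  toFun t := Fin.castLE h (Fin.natAdd a t)
  inj' s t hst := by simpa using hst
  map_rel_iff' {s t} := by
    change (pathGraph n).Adj (Fin.castLE h (Fin.natAdd a s)) (Fin.castLE h (Fin.natAdd a t)) ↔ _
    simp only [pathGraph_adj, Fin.val_castLE, Fin.val_natAdd]
    omega

@[simp] lemma val_pathGraphShift {k n : ℕ} (a : ℕ) (h : a + k ≤ n) (t : Fin k) :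
    (pathGraphShift a h t : ℕ) = a + t :=
  rfl

lemma exists_pathGraphShift_eq_iff {k n a : ℕ} (h : a + k ≤ n) (j : Fin n) :
    (∃ t, pathGraphShift a h t = j) ↔ a ≤ j ∧ (j : ℕ) < a + k := by
  constructor
  · rintro ⟨t, rfl⟩
    simp
  · intro hj
    refine ⟨⟨j - a, by omega⟩, Fin.ext ?_⟩
    rw [val_pathGraphShift, Fin.val_mk]
    omega

end SimpleGraph

section Columns

variable {V W : Type*} {n : ℕ}

noncomputable def col (C : Finset (V × Fin n)) (j : Fin n) : Finset V :=
  C.preimage (·, j) fun _ _ _ _ h => congrArg Prod.fst h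

@[simp] lemma mem_col {C : Finset (V × Fin n)} {j : Fin n} {v : V} : v ∈ col C j ↔ (v, j) ∈ C :=
  mem_preimage

lemma filter_snd_eq_nonempty_iff {C : Finset (V × Fin n)} {j : Fin n} :
    (C.filter (·.2 = j)).Nonempty ↔ (col C j).Nonempty := by
  refine ⟨fun ⟨p, hp⟩ => ⟨p.1, ?_⟩, fun ⟨v, hv⟩ => ⟨(v, j), mem_filter.2 ⟨mem_col.1 hv, rfl⟩⟩⟩
  obtain ⟨hpC, rfl⟩ := mem_filter.1 hp
  exact mem_col.2 hpC

def columnPair [DecidableEq V] (S T : Finset V) : Finset (V × Fin 2) :=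
  S.image (·, 0) ∪ T.image (·, 1)

-- `IsConnPair G (φ i) (φ j)` is the condition `a_{ij} = 1` defining the transfer matrix.
def IsConnPair [DecidableEq V] (G : SimpleGraph V) (S T : Finset V) : Prop :=
  IsConnSet (G □ pathGraph 2) (columnPair S T)

lemma isConnSet_image_prodMk_iff [DecidableEq (V × W)] (G : SimpleGraph V) (H : SimpleGraph W)
    (S : Finset V) (b : W) :
    IsConnSet (G □ H) (S.image (·, b)) ↔ IsConnSet G S := by
  rw [← (boxProdLeft G H b).isConnSet_map_iff, map_eq_image]
  rfl

lemma isConnSet_filter_col_or_col_iff [DecidableEq V] (G : SimpleGraph V) (C : Finset (V × Fin n))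
    {j j' : Fin n} (hj : (j : ℕ) + 1 = j') :
    IsConnSet (G □ pathGraph n) (C.filter fun p => p.2 = j ∨ p.2 = j') ↔
      IsConnPair G (col C j) (col C j') := by
  have hle : (j : ℕ) + 2 ≤ n := by omega
  let F := (Embedding.refl (G := G)).boxProd (pathGraphShift j hle)
  have h0 : pathGraphShift j hle 0 = j := Fin.ext (by simp)
  have h1 : pathGraphShift j hle 1 = j' := Fin.ext (by simp [← hj])
  have hF : (columnPair (col C j) (col C j')).map F.toEmbedding =
      C.filter fun p => p.2 = j ∨ p.2 = j' := by
    ext ⟨v, c⟩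
    simp only [columnPair, F, Embedding.boxProd, mem_map, mem_union, mem_image, mem_col, mem_filter]
    aesop
  rw [IsConnPair, ← F.isConnSet_map_iff, hF]

end Columns

section Interval

variable {V : Type*} {n : ℕ} {G : SimpleGraph V}

lemma IsConnSet.col_nonempty {C : Finset (V × Fin n)} (hC : IsConnSet (G □ pathGraph n) C)
    {p q : V × Fin n} (hp : p ∈ C) (hq : q ∈ C) {j : Fin n} (hpj : p.2 ≤ j) (hjq : j ≤ q.2) :
    (col C j).Nonempty := by
  rcases hpj.eq_or_lt with rfl | hlt
  · exact ⟨p.1, mem_col.2 hp⟩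
  -- A walk from `p` to `q` leaves the columns before `j`, and its first step out lands in `j`.
  obtain ⟨w⟩ := hC.2.preconnected ⟨p, hp⟩ ⟨q, hq⟩
  obtain ⟨d, -, hd₁, hd₂⟩ := w.exists_boundary_dart {x | x.1.2 < j} hlt (not_lt.2 hjq)
  have hstep : (d.snd.1.2 : ℕ) ≤ d.fst.1.2 + 1 := by
    have hadj : (G □ pathGraph n).Adj d.fst.1 d.snd.1 := d.adj
    rcases boxProd_adj.1 hadj with ⟨-, h⟩ | ⟨h, -⟩
    · rw [h]; omega
    · rw [pathGraph_adj] at h; omega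
  have hcol : d.snd.1.2 = j := Fin.ext (by simp only [Set.mem_ofPred_eq, not_lt] at hd₁ hd₂; omega)
  exact ⟨d.snd.1.1, mem_col.2 (hcol ▸ d.snd.2)⟩

end Interval

section ColumnSpan

variable {V : Type*} {n : ℕ} {G : SimpleGraph V}

def HasColumnSpan (C : Finset (V × Fin n)) (a k : ℕ) : Prop :=
  ∀ j : Fin n, (col C j).Nonempty ↔ a ≤ j ∧ (j : ℕ) < a + k

lemma IsConnSet.exists_hasColumnSpan {C : Finset (V × Fin n)}
    (hC : IsConnSet (G □ pathGraph n) C) : ∃ a k, 0 < k ∧ a + k ≤ n ∧ HasColumnSpan C a k := by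
  obtain ⟨p, hp, hpmin⟩ := C.exists_min_image (·.2) hC.1
  obtain ⟨q, hq, hqmax⟩ := C.exists_max_image (·.2) hC.1
  have hpq : p.2 ≤ q.2 := hpmin q hq
  refine ⟨p.2, q.2 - p.2 + 1, by omega, by omega, fun j => ⟨?_, fun hj => ?_⟩⟩
  · rintro ⟨v, hv⟩
    have h₁ : p.2 ≤ j := hpmin _ (mem_col.1 hv)
    have h₂ : j ≤ q.2 := hqmax _ (mem_col.1 hv)
    omega
  · exact hC.col_nonempty hp hq hj.1 (by omega)

lemma HasColumnSpan.unique {C : Finset (V × Fin n)} {a k a' k' : ℕ} (hC : HasColumnSpan C a k)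
    (hC' : HasColumnSpan C a' k') (hk : 0 < k) (hak : a + k ≤ n) (hk' : 0 < k')
    (hak' : a' + k' ≤ n) : a = a' ∧ k = k' := by
  have h₁ := (hC' ⟨a, by omega⟩).1 ((hC _).2 (by dsimp only; omega))
  have h₂ := (hC ⟨a', by omega⟩).1 ((hC' _).2 (by dsimp only; omega))
  have h₃ := (hC' ⟨a + k - 1, by omega⟩).1 ((hC _).2 (by dsimp only; omega))
  have h₄ := (hC ⟨a' + k' - 1, by omega⟩).1 ((hC' _).2 (by dsimp only; omega))
  dsimp only at h₁ h₂ h₃ h₄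
  omega

end ColumnSpan

section Characterization

variable {V : Type*} {n : ℕ} {G : SimpleGraph V}

lemma IsConnSet.reachable_of_subset {T C : Finset V} (hT : IsConnSet G T) (hTC : T ⊆ C)
    {x y : V} (hx : x ∈ T) (hy : y ∈ T) : (G.induce C).Reachable ⟨x, hTC hx⟩ ⟨y, hTC hy⟩ :=
  (hT.2.preconnected ⟨x, hx⟩ ⟨y, hy⟩).map (induceHomOfLE G (coe_subset.2 hTC)).toHom

lemma HasColumnSpan.eq_image_col [DecidableEq V] {C : Finset (V × Fin n)} {a : ℕ}
    (hC : HasColumnSpan C a 1) {j : Fin n} (hj : (j : ℕ) = a) : C = (col C j).image (·, j) := by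
  ext ⟨v, c⟩
  have hc : (v, c) ∈ C → c = j := fun hv => Fin.ext (by have := (hC c).1 ⟨v, mem_col.2 hv⟩; omega)
  simp only [mem_image, mem_col, Prod.mk.injEq]
  exact ⟨fun hv => ⟨v, hc hv ▸ hv, rfl, (hc hv).symm⟩, by rintro ⟨_, hv, rfl, rfl⟩; exact hv⟩

lemma HasColumnSpan.isConnSet {C : Finset (V × Fin n)} {a l : ℕ} (hC : HasColumnSpan C a (l + 1))
    (h : a + (l + 1) ≤ n) (hl : 0 < l)
    (hpair : ∀ t : Fin l, IsConnSet (G □ pathGraph n)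
      (C.filter fun p => p.2 = pathGraphShift a h t.castSucc ∨ p.2 = pathGraphShift a h t.succ)) :
    IsConnSet (G □ pathGraph n) C := by
  set e := pathGraphShift a h
  have hcol : ∀ s, (col C (e s)).Nonempty := fun s =>
    (hC _).2 ((exists_pathGraphShift_eq_iff h _).1 ⟨s, rfl⟩)
  obtain ⟨v₀, hv₀⟩ := hcol 0
  have hreach : ∀ s, ∀ p (hp : p ∈ C), p.2 = e s →
      ((G □ pathGraph n).induce C).Reachable ⟨(v₀, e 0), mem_col.1 hv₀⟩ ⟨p, hp⟩ := by
    intro s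
    induction s using Fin.induction with
    | zero =>
      intro p hp hps
      exact (hpair ⟨0, hl⟩).reachable_of_subset (filter_subset _ _)
        (mem_filter.2 ⟨mem_col.1 hv₀, Or.inl rfl⟩) (mem_filter.2 ⟨hp, Or.inl hps⟩)
    | succ t ih =>
      intro p hp hps
      obtain ⟨w, hw⟩ := hcol t.castSucc
      exact (ih _ (mem_col.1 hw) rfl).trans ((hpair t).reachable_of_subset (filter_subset _ _)
        (mem_filter.2 ⟨mem_col.1 hw, Or.inl rfl⟩) (mem_filter.2 ⟨hp, Or.inr hps⟩))
  refine ⟨⟨_, mem_col.1 hv₀⟩, (connected_iff_exists_forall_reachable _).2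
    ⟨⟨_, mem_col.1 hv₀⟩, fun ⟨p, hp⟩ => ?_⟩⟩
  obtain ⟨s, hs⟩ := (exists_pathGraphShift_eq_iff h _).2 ((hC p.2).1 ⟨p.1, mem_col.2 hp⟩)
  exact hreach s p hp hs.symm

-- For `l ≥ 1` connectivity follows from the pair conditions (`HasColumnSpan.isConnSet`);
-- a single column has to be connected in its own right.
def IsLadder [DecidableEq V] (G : SimpleGraph V) {l : ℕ} (S : Fin (l + 1) → Finset V) : Prop :=
  (l = 0 → IsConnSet G (S 0)) ∧ ∀ t : Fin l, IsConnPair G (S t.castSucc) (S t.succ)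

theorem HasColumnSpan.isCLSet_iff [DecidableEq V] {C : Finset (V × Fin n)} {a l : ℕ}
    (hC : HasColumnSpan C a (l + 1)) (h : a + (l + 1) ≤ n) :
    IsCLSet G n C ↔ IsLadder G fun t => col C (pathGraphShift a h t) := by
  set e := pathGraphShift a h
  have hcol : ∀ s, (col C (e s)).Nonempty := fun s =>
    (hC _).2 ((exists_pathGraphShift_eq_iff h _).1 ⟨s, rfl⟩)
  have hpair_iff : ∀ t : Fin l,
      IsConnSet (G □ pathGraph n) (C.filter fun p => p.2 = e t.castSucc ∨ p.2 = e t.succ) ↔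
        IsConnPair G (col C (e t.castSucc)) (col C (e t.succ)) := fun t =>
    isConnSet_filter_col_or_col_iff G C (by simp [e, add_assoc])
  have hsingle : l = 0 → (IsConnSet (G □ pathGraph n) C ↔ IsConnSet G (col C (e 0))) := by
    rintro rfl
    conv_lhs => rw [hC.eq_image_col (j := e 0) (by simp [e])]
    exact isConnSet_image_prodMk_iff G _ _ _
  constructor
  · rintro ⟨hconn, hCL⟩
    refine ⟨fun hl => (hsingle hl).1 hconn, fun t => (hpair_iff t).1 (hCL _ _ ?_ ?_ ?_)⟩
    · exact pathGraph_adj.2 (Or.inl (by simp [e, add_assoc]))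
    · exact filter_snd_eq_nonempty_iff.2 (hcol _)
    · exact filter_snd_eq_nonempty_iff.2 (hcol _)
  · rintro ⟨h₀, hpairs⟩
    have hconsec : ∀ j j' : Fin n, (j : ℕ) + 1 = j' → (col C j).Nonempty → (col C j').Nonempty →
        IsConnSet (G □ pathGraph n) (C.filter fun p => p.2 = j ∨ p.2 = j') := by
      intro j j' hjj' hj hj'
      have hj := (hC j).1 hj
      have hj' := (hC j').1 hj'
      let t : Fin l := ⟨j - a, by omega⟩
      have ht₀ : e t.castSucc = j :=
        Fin.ext (by simp only [Fin.castSucc_mk, val_pathGraphShift, e, t]; omega)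
      have ht₁ : e t.succ = j' :=
        Fin.ext (by simp only [Fin.succ_mk, val_pathGraphShift, e, t]; omega)
      rw [← ht₀, ← ht₁]
      exact (hpair_iff t).2 (hpairs t)
    refine ⟨?_, fun j j' hjj' hj hj' => ?_⟩
    · rcases l.eq_zero_or_pos with rfl | hl
      · exact (hsingle rfl).2 (h₀ rfl)
      · exact hC.isConnSet h hl fun t => (hpair_iff t).2 (hpairs t)
    rw [filter_snd_eq_nonempty_iff] at hj hj'
    rcases pathGraph_adj.1 hjj' with hjj' | hjj'
    · exact hconsec j j' hjj' hj hj'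
    · simpa only [or_comm] using hconsec j' j hjj' hj' hj

end Characterization

section Counting

variable {V : Type*} [Fintype V] {n : ℕ}

noncomputable def ofColumns (f : Fin n → Finset V) : Finset (V × Fin n) :=
  univ.filter fun p => p.1 ∈ f p.2

@[simp] lemma col_ofColumns (f : Fin n → Finset V) : col (ofColumns f) = f := by
  ext j v
  simp [ofColumns]

lemma ofColumns_col (C : Finset (V × Fin n)) : ofColumns (col C) = C := by
  ext p
  simp [ofColumns]

lemma hasColumnSpan_ofColumns_extend {a l : ℕ} (S : Fin (l + 1) → {T : Finset V // T.Nonempty})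
    (h : a + (l + 1) ≤ n) :
    HasColumnSpan (ofColumns (Function.extend (pathGraphShift a h) (fun t => (S t).1) ⊥)) a
      (l + 1) := by
  intro j
  rw [col_ofColumns, ← exists_pathGraphShift_eq_iff h]
  by_cases hj : ∃ t, pathGraphShift a h t = j
  · obtain ⟨t, rfl⟩ := hj
    rw [(pathGraphShift a h).injective.extend_apply]
    exact iff_of_true (S t).2 ⟨t, rfl⟩
  · rw [Function.extend_apply' _ _ _ hj, Pi.bot_apply, bot_eq_empty]
    exact iff_of_false not_nonempty_empty hj

theorem card_isCLSet_hasColumnSpan [DecidableEq V] (G : SimpleGraph V) {a l : ℕ}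
    (h : a + (l + 1) ≤ n) :
    #{C : Finset (V × Fin n) | IsCLSet G n C ∧ HasColumnSpan C a (l + 1)} =
      #{S : Fin (l + 1) → {T : Finset V // T.Nonempty} | IsLadder G fun t => (S t).1} := by
  set e := pathGraphShift a h
  have he : Function.Injective e := e.injective
  refine card_bij' (fun C hC t => ⟨col C (e t), ?_⟩)
    (fun S _ => ofColumns (Function.extend e (fun t => (S t).1) ⊥)) ?_ ?_ ?_ ?_
  · simp only [mem_filter, mem_univ, true_and] at hC
    exact (hC.2 _).2 ((exists_pathGraphShift_eq_iff h _).1 ⟨t, rfl⟩)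
  · intro C hC
    simp only [mem_filter, mem_univ, true_and] at hC ⊢
    exact (hC.2.isCLSet_iff h).1 hC.1
  · intro S hS
    have hsp := hasColumnSpan_ofColumns_extend S h
    simp only [mem_filter, mem_univ, true_and] at hS ⊢
    refine ⟨(hsp.isCLSet_iff h).2 ?_, hsp⟩
    convert hS using 2 with t
    rw [col_ofColumns]
    exact he.extend_apply _ _ t
  · intro C hC
    simp only [mem_filter, mem_univ, true_and] at hC
    conv_rhs => rw [← ofColumns_col C]
    congr 1
    funext j
    by_cases hj : ∃ t, e t = j
    · obtain ⟨t, rfl⟩ := hj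
      rw [he.extend_apply]
    · rw [Function.extend_apply' _ _ _ hj, eq_comm, Pi.bot_apply, bot_eq_empty,
        ← not_nonempty_iff_eq_empty, hC.2, ← exists_pathGraphShift_eq_iff h]
      exact hj
  · intro S _
    funext t
    ext1
    simp only [col_ofColumns, he.extend_apply]

end Counting

section Enumeration

variable {V : Type*} [Fintype V]

theorem NL_eq_sum_range [DecidableEq V] (G : SimpleGraph V) (n : ℕ) :
    NL G n = ∑ l ∈ range n, (n - l) *
      #{S : Fin (l + 1) → {T : Finset V // T.Nonempty} | IsLadder G fun t => (S t).1} := by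
  have hNL : NL G n = #{C : Finset (V × Fin n) | IsCLSet G n C} := by
    rw [NL, Set.ncard_eq_toFinset_card', Set.toFinset_ofPred]
  rw [hNL, card_eq_sum_card_filter_of_existsUnique (t := (range n).sigma fun l => range (n - l))
      (P := fun C x => HasColumnSpan C x.2 (x.1 + 1)), sum_sigma]
  · refine sum_congr rfl fun l hl => ?_
    rw [mem_range] at hl
    refine (sum_congr rfl fun a ha => ?_).trans (by rw [sum_const, card_range, smul_eq_mul])
    rw [mem_range] at ha
    rw [filter_filter, card_isCLSet_hasColumnSpan G (by dsimp only; omega)]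
  · intro C hC
    rw [mem_filter] at hC
    obtain ⟨a, k, hk, hak, hspan⟩ := hC.2.1.exists_hasColumnSpan
    refine ⟨⟨k - 1, a⟩, ⟨by simp only [mem_sigma, mem_range]; omega,
      by rwa [Nat.sub_add_cancel hk]⟩, ?_⟩
    rintro ⟨l, a'⟩ ⟨hmem, hspan'⟩
    simp only [mem_sigma, mem_range] at hmem
    dsimp only at hspan'
    obtain ⟨rfl, rfl⟩ := hspan'.unique hspan (by omega) (by omega) hk hak
    simp

lemma card_isLadder_zero [DecidableEq V] (G : SimpleGraph V) :
    #{S : Fin 1 → {T : Finset V // T.Nonempty} | IsLadder G fun t => (S t).1} = numConnSets G := by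
  rw [numConnSets, Set.ncard_eq_toFinset_card', Set.toFinset_ofPred]
  refine card_bij' (fun S _ => (S 0).1) (fun T hT _ => ⟨T, (mem_filter.1 hT).2.1⟩) ?_ ?_ ?_ ?_
  · intro S hS
    simp only [mem_filter, mem_univ, true_and] at hS ⊢
    exact hS.1 rfl
  · intro T hT
    simp only [mem_filter, mem_univ, true_and] at hT ⊢
    exact ⟨fun _ => hT, finZeroElim⟩
  · intro S _
    funext t
    fin_cases t
    rfl
  · intro T _
    rfl

lemma card_isLadder_eq_sum_sum_pow [DecidableEq V] (G : SimpleGraph V) {l : ℕ} (hl : 0 < l)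
    {ι : Type*} [Fintype ι] [DecidableEq ι]
    (φ : ι ≃ {T : Finset V // T.Nonempty}) (A : Matrix ι ι ℕ)
    (hA : ∀ i j, A i j = if IsConnPair G (φ i) (φ j) then 1 else 0) :
    #{S : Fin (l + 1) → {T : Finset V // T.Nonempty} | IsLadder G fun t => (S t).1} =
      ∑ i, ∑ j, (A ^ l) i j := by
  rw [Matrix.sum_sum_pow_apply_eq_card _ A hA]
  refine (card_equiv ((Equiv.refl _).arrowCongr φ) fun p => ?_).symm
  simp [IsLadder, hl.ne']

end Enumeration

theorem statement1_general {m : ℕ} (G : SimpleGraph (Fin m))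
    (n : ℕ)
    (φ : Fin (2 ^ m - 1) ≃ {S : Finset (Fin m) // S.Nonempty})
    (A : Matrix (Fin (2 ^ m - 1)) (Fin (2 ^ m - 1)) ℕ)
    (hA : ∀ i j, A i j =
      if IsConnSet (G □ pathGraph 2)
          ((φ i).1.image (fun p => (p, (0 : Fin 2))) ∪
            (φ j).1.image (fun q => (q, (1 : Fin 2))))
      then 1 else 0) :
    NL G n =
      n * numConnSets G +
        ∑ k ∈ Finset.Icc 2 n, (n - k + 1) * (∑ i, ∑ j, (A ^ (k - 1)) i j) := by
  rw [NL_eq_sum_range, sum_range_tsub_mul_eq_add_sum_Icc, card_isLadder_zero]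
  congr 1
  refine sum_congr rfl fun k hk => ?_
  rw [card_isLadder_eq_sum_sum_pow G (by rw [mem_Icc] at hk; omega) φ A hA]

/-- For a connected graph `G` of order `m` and `n ≥ 1`,
`N_L(G×P_n) = n·N(G) + Σ_{k=2}^{n} (n−k+1)·(1ᵀ·A^{k−1}·1)` where `A` is the transfer
matrix of `G`. -/
theorem statement1 {m : ℕ} (G : SimpleGraph (Fin m)) (hG : G.Connected)
    (n : ℕ) (hn : 0 < n)
    (φ : Fin (2 ^ m - 1) ≃ {S : Finset (Fin m) // S.Nonempty})
    (A : Matrix (Fin (2 ^ m - 1)) (Fin (2 ^ m - 1)) ℕ)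
    (hA : ∀ i j, A i j =
      if IsConnSet (G □ pathGraph 2)
          ((φ i).1.image (fun p => (p, (0 : Fin 2))) ∪
            (φ j).1.image (fun q => (q, (1 : Fin 2))))
      then 1 else 0) :
    NL G n =
      n * numConnSets G +
        ∑ k ∈ Finset.Icc 2 n, (n - k + 1) * (∑ i, ∑ j, (A ^ (k - 1)) i j) :=
  statement1_general G n φ A hA
end

section
/- Let G be a connected graph that is not a complete graph and let n ≥ 3. Then N_L(G×P_n) < N(G×P_n), i.e., there is a connected set of G×P_n that does not belong to C_L(G×P_n). -/
open SimpleGraph Finset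
open scoped Classical

lemma exists_nonadj {m : ℕ} (G : SimpleGraph (Fin m)) (hnc : G ≠ ⊤) :
    ∃ a b : Fin m, a ≠ b ∧ ¬ G.Adj a b := by
  by_contra h
  push_neg at h
  apply hnc
  ext a b
  simp only [top_adj]
  exact ⟨fun h' => h'.ne, fun hne => h a b hne⟩

lemma exists_triple_of_walk {m : ℕ} {G : SimpleGraph (Fin m)} {a b : Fin m}
    (p : G.Walk a b) : a ≠ b → ¬ G.Adj a b →
    ∃ u x w : Fin m, u ≠ w ∧ G.Adj u x ∧ G.Adj x w ∧ ¬ G.Adj u w := by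
  induction p with
  | nil => intro h _; exact absurd rfl h
  | @cons a c b h q ih =>
    intro hab hnadj
    by_cases hcb : G.Adj c b
    · exact ⟨a, c, b, hab, h, hcb, hnadj⟩
    · by_cases hcbe : c = b
      · subst hcbe; exact absurd h hnadj
      · exact ih hcbe hcb

/-- If `G` is a connected graph that is not complete and `n ≥ 3`, then
`N_L(G×P_n) < N(G×P_n)`; i.e., there is a connected set of `G×P_n` not in `C_L(G×P_n)`. -/
theorem statement2 {m : ℕ} (G : SimpleGraph (Fin m)) (hG : G.Connected)
    (hnc : G ≠ ⊤) (n : ℕ) (hn : 3 ≤ n) :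
    NL G n < numConnSets (G □ pathGraph n) ∧
    ∃ C : Finset (Fin m × Fin n), IsConnSet (G □ pathGraph n) C ∧ ¬ IsCLSet G n C := by
  obtain ⟨a, b, hab, hnadj⟩ := exists_nonadj G hnc
  obtain ⟨pw⟩ := hG.preconnected a b
  obtain ⟨u, x, w, huw, hux, hxw, hnuw⟩ := exists_triple_of_walk pw hab hnadj
  set c0 : Fin n := ⟨0, by omega⟩ with hc0
  set c1 : Fin n := ⟨1, by omega⟩ with hc1
  set c2 : Fin n := ⟨2, by omega⟩ with hc2
  have hne01 : c0 ≠ c1 := by simp [hc0, hc1, Fin.ext_iff]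
  have hne02 : c0 ≠ c2 := by simp [hc0, hc2, Fin.ext_iff]
  have hne12 : c1 ≠ c2 := by simp [hc1, hc2, Fin.ext_iff]
  set C : Finset (Fin m × Fin n) :=
    {(u, c0), (x, c0), (w, c0), (u, c1), (w, c1), (u, c2)} with hC
  have p01 : (pathGraph n).Adj c0 c1 := pathGraph_adj.mpr (Or.inl rfl)
  have p12 : (pathGraph n).Adj c1 c2 := pathGraph_adj.mpr (Or.inl rfl)
  have hu0 : (u, c0) ∈ C := by simp [hC]
  have hu1 : (u, c1) ∈ C := by simp [hC]
  have hw1 : (w, c1) ∈ C := by simp [hC]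
  have hu2 : (u, c2) ∈ C := by simp [hC]
  -- connectivity of C
  have hCconn : IsConnSet (G □ pathGraph n) C := by
    refine ⟨⟨(u, c0), hu0⟩, ?_⟩
    rw [connected_iff]
    refine ⟨?_, ⟨⟨(u, c0), by simpa using hu0⟩⟩⟩
    set H := (G □ pathGraph n).induce (C : Set (Fin m × Fin n)) with hH
    have lift : ∀ {p q : Fin m × Fin n} (hp : p ∈ C) (hq : q ∈ C),
        (G □ pathGraph n).Adj p q →
        H.Adj ⟨p, by simpa using hp⟩ ⟨q, by simpa using hq⟩ := by
      intro p q hp hq h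
      simpa [hH] using h
    have key : ∀ p : (C : Set (Fin m × Fin n)),
        H.Reachable p ⟨(u, c0), by simpa using hu0⟩ := by
      rintro ⟨⟨v, j⟩, hp⟩
      simp only [Finset.coe_insert, Set.mem_insert_iff, Finset.coe_singleton,
        Set.mem_singleton_iff, Prod.mk.injEq, hC, Finset.mem_coe, Finset.mem_insert,
        Finset.mem_singleton] at hp
      have rx : H.Reachable ⟨(x, c0), by simp [hC]⟩ ⟨(u, c0), by simpa using hu0⟩ :=
        (lift (p := (x, c0)) (q := (u, c0)) (by simp [hC]) hu0
          (boxProd_adj.mpr (Or.inl ⟨hux.symm, rfl⟩))).reachable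
      have rw' : H.Reachable ⟨(w, c0), by simp [hC]⟩ ⟨(u, c0), by simpa using hu0⟩ :=
        ((lift (p := (w, c0)) (q := (x, c0)) (by simp [hC]) (by simp [hC])
          (boxProd_adj.mpr (Or.inl ⟨hxw.symm, rfl⟩))).reachable).trans rx
      have ru1 : H.Reachable ⟨(u, c1), by simp [hC]⟩ ⟨(u, c0), by simpa using hu0⟩ :=
        (lift (p := (u, c1)) (q := (u, c0)) (by simp [hC]) hu0
          (boxProd_adj.mpr (Or.inr ⟨p01.symm, rfl⟩))).reachable
      rcases hp with ⟨h1, h2⟩ | ⟨h1, h2⟩ | ⟨h1, h2⟩ | ⟨h1, h2⟩ | ⟨h1, h2⟩ | ⟨h1, h2⟩ <;>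
        cases h1.symm <;> cases h2.symm
      · exact Reachable.refl _
      · exact rx
      · exact rw'
      · exact ru1
      · exact ((lift (p := (w, c1)) (q := (w, c0)) (by simp [hC]) (by simp [hC])
          (boxProd_adj.mpr (Or.inr ⟨p01.symm, rfl⟩))).reachable).trans rw'
      · exact ((lift (p := (u, c2)) (q := (u, c1)) (by simp [hC]) (by simp [hC])
          (boxProd_adj.mpr (Or.inr ⟨p12.symm, rfl⟩))).reachable).trans ru1
    intro p q
    exact (key p).trans (key q).symm
  -- C is not a CL-set
  have hnotCL : ¬ IsCLSet G n C := by
    rintro ⟨-, h2⟩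
    have hconn := h2 c1 c2 p12
      ⟨(u, c1), Finset.mem_filter.mpr ⟨hu1, rfl⟩⟩
      ⟨(u, c2), Finset.mem_filter.mpr ⟨hu2, rfl⟩⟩
    set D := C.filter (fun p => p.2 = c1 ∨ p.2 = c2) with hD
    have hwD : (w, c1) ∈ D := Finset.mem_filter.mpr ⟨hw1, Or.inl rfl⟩
    have huD : (u, c1) ∈ D := Finset.mem_filter.mpr ⟨hu1, Or.inl rfl⟩
    obtain ⟨pk⟩ := hconn.2.preconnected ⟨(w, c1), by simpa using hwD⟩
      ⟨(u, c1), by simpa using huD⟩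
    by_cases hnil : pk.Nil
    · have := hnil.eq
      rw [Subtype.mk.injEq, Prod.mk.injEq] at this
      exact huw this.1.symm
    · -- the walk has a first step: from (w,c1) to some vertex of D, impossible
      have hadj := pk.adj_getVert_succ (i := 0) (by
        rw [SimpleGraph.Walk.nil_iff_length_eq] at hnil
        omega)
      have h0 : pk.getVert 0 = ⟨(w, c1), by simpa using hwD⟩ := pk.getVert_zero
      rw [h0] at hadj
      set q := pk.getVert 1 with hq
      have hqD : (q : Fin m × Fin n) ∈ D := Finset.mem_coe.mp q.2
      have hadj' : (G □ pathGraph n).Adj (w, c1) (q : Fin m × Fin n) := by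
        simpa using hadj
      obtain ⟨hqC, hqcol⟩ := Finset.mem_filter.mp hqD
      simp only [hC, Finset.mem_insert, Finset.mem_singleton] at hqC
      rcases hqC with h | h | h | h | h | h <;> rw [h] at hadj' hqcol
      · exact absurd hqcol (by simp [hne01, hne02])
      · exact absurd hqcol (by simp [hne01, hne02])
      · exact absurd hqcol (by simp [hne01, hne02])
      · rcases boxProd_adj.mp hadj' with ⟨h', -⟩ | ⟨-, h'⟩
        · exact hnuw h'.symm
        · exact huw h'.symm
      · exact (G □ pathGraph n).irrefl hadj'
      · rcases boxProd_adj.mp hadj' with ⟨-, h'⟩ | ⟨-, h'⟩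
        · exact hne12 h'
        · exact huw h'.symm
  refine ⟨?_, ⟨C, hCconn, hnotCL⟩⟩
  apply Set.ncard_lt_ncard ?_ (Set.toFinite _)
  rw [Set.ssubset_def]
  exact ⟨fun D hD => hD.1, fun h => hnotCL (h hCconn)⟩
end

section
/- Let m and n be positive integers and let K_m be the complete graph on m vertices. Then every connected set of K_m×P_n belongs to C_L(K_m×P_n); consequently N(K_m×P_n) = N_L(K_m×P_n). -/
open SimpleGraph Finset
open scoped Classical

/-- Any walk in the induced subgraph on `C` from a column `≤ j` to a column `> j`
must use a vertical edge crossing from column `j` to column `j+1 = j'`. -/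
lemma crossing_aux {m n : ℕ} {C : Finset (Fin m × Fin n)} {j j' : Fin n}
    (hjj' : (j : ℕ) + 1 = (j' : ℕ)) :
    ∀ (u v : (C : Set (Fin m × Fin n)))
      (_ : (((⊤ : SimpleGraph (Fin m)) □ pathGraph n).induce
          (C : Set (Fin m × Fin n))).Walk u v),
      ((u : Fin m × Fin n).2 : ℕ) ≤ (j : ℕ) → (j : ℕ) < ((v : Fin m × Fin n).2 : ℕ) →
      ∃ x : Fin m, (x, j) ∈ C ∧ (x, j') ∈ C := by
  intro u v w
  induction w with
  | nil => intro h1 h2; omega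
  | @cons a b c hadj w ih =>
    intro h1 h2
    have hadj' : (((⊤ : SimpleGraph (Fin m)) □ pathGraph n)).Adj a.val b.val := hadj
    rcases boxProd_adj.mp hadj' with ⟨_, hcol⟩ | ⟨hpadj, hrow⟩
    · exact ih (by omega) h2
    · rcases pathGraph_adj.mp hpadj with hc | hc
      · -- a.2 + 1 = b.2
        by_cases hb : ((b : Fin m × Fin n).2 : ℕ) ≤ (j : ℕ)
        · exact ih hb h2
        · -- then a.2 = j, b.2 = j'
          have ha2 : (a : Fin m × Fin n).2 = j := Fin.ext (by omega)
          have hb2 : (b : Fin m × Fin n).2 = j' := Fin.ext (by omega)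
          refine ⟨(a : Fin m × Fin n).1, ?_, ?_⟩
          · have := a.prop
            rwa [show ((a : Fin m × Fin n).1, j) = a.val by
              rw [← ha2]] 
          · have := b.prop
            rwa [show ((a : Fin m × Fin n).1, j') = b.val by
              rw [hrow, ← hb2]]
      · -- b.2 + 1 = a.2
        exact ih (by omega) h2

lemma key {m n : ℕ} {C : Finset (Fin m × Fin n)} {j j' : Fin n}
    (hjj' : (j : ℕ) + 1 = (j' : ℕ))
    (hC : IsConnSet ((⊤ : SimpleGraph (Fin m)) □ pathGraph n) C)
    (h1 : (C.filter (fun p => p.2 = j)).Nonempty)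
    (h2 : (C.filter (fun p => p.2 = j')).Nonempty) :
    IsConnSet ((⊤ : SimpleGraph (Fin m)) □ pathGraph n)
      (C.filter (fun p => p.2 = j ∨ p.2 = j')) := by
  obtain ⟨u, hu⟩ := h1
  obtain ⟨v, hv⟩ := h2
  rw [mem_filter] at hu hv
  -- find the crossing vertex x
  obtain ⟨x, hxj, hxj'⟩ : ∃ x : Fin m, (x, j) ∈ C ∧ (x, j') ∈ C := by
    have hreach := hC.2.preconnected ⟨u, by simpa using hu.1⟩ ⟨v, by simpa using hv.1⟩
    obtain ⟨w⟩ := hreach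
    exact crossing_aux hjj' _ _ w (by simp [hu.2]) (by simp [hv.2]; omega)
  set D := C.filter (fun p => p.2 = j ∨ p.2 = j') with hD
  have hxjD : (x, j) ∈ D := by simp [hD, hxj]
  have hxj'D : (x, j') ∈ D := by simp [hD, hxj']
  refine ⟨⟨(x, j), hxjD⟩, ?_⟩
  rw [connected_iff]
  constructor
  · -- preconnected: everything reaches (x, j)
    have hjne : j ≠ j' := by intro h; rw [h] at hjj'; omega
    have hadjjj' : (pathGraph n).Adj j j' := pathGraph_adj.mpr (Or.inl hjj')
    set GD := (((⊤ : SimpleGraph (Fin m)) □ pathGraph n).induce (D : Set (Fin m × Fin n)))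
    have hx0x1 : GD.Adj ⟨(x, j'), by simpa using hxj'D⟩ ⟨(x, j), by simpa using hxjD⟩ :=
      boxProd_adj.mpr (Or.inr ⟨hadjjj'.symm, rfl⟩)
    have hub : ∀ a : (D : Set (Fin m × Fin n)),
        GD.Reachable a ⟨(x, j), by simpa using hxjD⟩ := by
      intro a
      have haD := mem_filter.mp (show a.val ∈ D from a.prop)
      rcases haD.2 with hcol | hcol
      · by_cases hax : a.val.1 = x
        · have : a = ⟨(x, j), by simpa using hxjD⟩ := by
            apply Subtype.ext; exact Prod.ext hax hcol
          rw [this]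
        · exact (SimpleGraph.Adj.reachable
            (boxProd_adj.mpr (Or.inl ⟨hax, hcol⟩) :
              GD.Adj a ⟨(x, j), by simpa using hxjD⟩))
      · by_cases hax : a.val.1 = x
        · have : a = ⟨(x, j'), by simpa using hxj'D⟩ := by
            apply Subtype.ext; exact Prod.ext hax hcol
          rw [this]
          exact hx0x1.reachable
        · refine SimpleGraph.Reachable.trans ?_ hx0x1.reachable
          exact (SimpleGraph.Adj.reachable
            (boxProd_adj.mpr (Or.inl ⟨hax, hcol⟩) :
              GD.Adj a ⟨(x, j'), by simpa using hxj'D⟩))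
    intro a b
    exact (hub a).trans (hub b).symm
  · exact ⟨⟨(x, j), by simpa using hxjD⟩⟩

/-- For the complete graph `K_m` and any `n ≥ 1`, every connected set of
`K_m×P_n` belongs to `C_L(K_m×P_n)`; consequently `N(K_m×P_n) = N_L(K_m×P_n)`. -/
theorem statement3 (m n : ℕ) (hm : 0 < m) (hn : 0 < n) :
    (∀ C : Finset (Fin m × Fin n),
      IsConnSet ((⊤ : SimpleGraph (Fin m)) □ pathGraph n) C →
        IsCLSet (⊤ : SimpleGraph (Fin m)) n C) ∧
    numConnSets ((⊤ : SimpleGraph (Fin m)) □ pathGraph n) =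
      NL (⊤ : SimpleGraph (Fin m)) n := by
  have main : ∀ C : Finset (Fin m × Fin n),
      IsConnSet ((⊤ : SimpleGraph (Fin m)) □ pathGraph n) C →
        IsCLSet (⊤ : SimpleGraph (Fin m)) n C := by
    intro C hC
    refine ⟨hC, ?_⟩
    intro j j' hadj h1 h2
    rcases pathGraph_adj.mp hadj with h | h
    · exact key h hC h1 h2
    · have := key h hC h2 h1
      rwa [show C.filter (fun p => p.2 = j' ∨ p.2 = j)
          = C.filter (fun p => p.2 = j ∨ p.2 = j') from
        filter_congr (fun p _ => by rw [or_comm])] at this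
  refine ⟨main, ?_⟩
  unfold numConnSets NL
  congr 1
  ext C
  exact ⟨fun h => main C h, fun h => h.1⟩
end

section
/- For any positive integers m and n, N(K_m×P_n) = Σ_{k=1}^{n} (n−k+1)·|C_{m,k}|, where |C_{m,k}| = [C(m,1), C(m,2), …, C(m,m)] · T^{k−1} · 1, T is the m×m matrix with entries t_{ij} = C(m,j) − C(m−i,j) when j ≤ m−i and t_{ij} = C(m,j) when j ≥ m−i+1, C(a,b) denotes the binomial coefficient, and 1 is the all-ones column vector of length m. -/
open SimpleGraph Finset
open scoped Classical

/-- The `m×m` transfer matrix `T` (0-indexed version of the 1-indexed matrix in the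
paper): `t_{ij} = C(m,j) − C(m−i,j)` when `j ≤ m−i` and `t_{ij} = C(m,j)` when
`j ≥ m−i+1`. -/
def Tmat (m : ℕ) : Matrix (Fin m) (Fin m) ℕ := fun i j =>
  if j.1 + 1 ≤ m - (i.1 + 1) then
    Nat.choose m (j.1 + 1) - Nat.choose (m - (i.1 + 1)) (j.1 + 1)
  else Nat.choose m (j.1 + 1)

/-! A connected set of `K_m □ P_n` occupies a block of consecutive columns `a, …, a + k`, and
since every column is a clique it is connected exactly when the row sets of consecutive columns
intersect. Hence for each `k < n` the connected sets spanning `k + 1` columns are, for each of the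
`n - k` positions of the block, in bijection with sequences of `k + 1` nonempty subsets of `Fin m`
in which consecutive members intersect. These are walks of length `k` for the relation "intersect"
on subsets, counted by powers of its 0/1 matrix `A`. Grouping subsets by cardinality is an
equitable partition (the number of `r`-sets meeting `S` depends only on `#S`), i.e. `A P = P T`
for the incidence matrix `P` of the grouping, so `A ^ k P = P T ^ k`. -/

open Matrix

section RelChain

variable {β : Type*} (R : β → β → Prop)

def IsRelChain {k : ℕ} (f : Fin (k + 1) → β) : Prop :=
  ∀ t : Fin k, R (f t.castSucc) (f t.succ)

def relMatrix [DecidableRel R] : Matrix β β ℕ := of fun x y => if R x y then 1 else 0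

lemma isRelChain_cons_iff {k : ℕ} (x : β) (g : Fin (k + 1) → β) :
    IsRelChain R (Fin.cons x g : Fin (k + 2) → β) ↔ R x (g 0) ∧ IsRelChain R g := by
  simp only [IsRelChain, Fin.forall_fin_succ, Fin.castSucc_zero, Fin.cons_zero,
    ← Fin.succ_castSucc, Fin.cons_succ]

variable [Fintype β] [DecidableEq β] [DecidableRel R]

lemma card_isRelChain_succ (p : β → Prop) [DecidablePred p] (k : ℕ) (x : β) :
    #{f : Fin (k + 2) → β | f 0 = x ∧ IsRelChain R f ∧ p (f (Fin.last (k + 1)))} =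
      #{g : Fin (k + 1) → β | R x (g 0) ∧ IsRelChain R g ∧ p (g (Fin.last k))} := by
  refine card_nbij' Fin.tail (fun g => Fin.cons x g) ?_ ?_ ?_ ?_
  · intro f hf
    simp only [coe_filter, mem_univ, true_and, Set.mem_ofPred_eq] at hf ⊢
    obtain ⟨rfl, hR, hp⟩ := hf
    rw [← Fin.cons_self_tail f, isRelChain_cons_iff] at hR
    exact ⟨hR.1, hR.2, hp⟩
  · intro g hg
    simp only [coe_filter, mem_univ, true_and, Set.mem_ofPred_eq] at hg ⊢
    exact ⟨rfl, (isRelChain_cons_iff R x g).2 ⟨hg.1, hg.2.1⟩, hg.2.2⟩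
  · intro f hf
    simp only [coe_filter, mem_univ, true_and, Set.mem_ofPred_eq] at hf
    exact hf.1 ▸ Fin.cons_self_tail f
  · intro g _
    exact Fin.tail_cons (α := fun _ => β) x g

theorem card_isRelChain_eq_pow_mulVec (p : β → Prop) [DecidablePred p] (k : ℕ) (x : β) :
    #{f : Fin (k + 1) → β | f 0 = x ∧ IsRelChain R f ∧ p (f (Fin.last k))} =
      (relMatrix R ^ k *ᵥ fun y => if p y then 1 else 0) x := by
  induction k generalizing x with
  | zero =>
    have : ({f : Fin 1 → β | f 0 = x ∧ IsRelChain R f ∧ p (f (Fin.last 0))} : Finset _) =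
        if p x then {fun _ => x} else ∅ := by
      ext f
      split_ifs with hx <;> simp +contextual [IsRelChain, funext_iff, Fin.forall_fin_one, hx]
    rw [this]
    split_ifs <;> simp [*]
  | succ k ih =>
    rw [card_isRelChain_succ, card_eq_sum_card_fiberwise (f := fun g => g 0) (t := univ)
      (fun _ _ => mem_univ _), pow_succ', ← mulVec_mulVec, ← funext ih]
    simp only [mulVec, dotProduct, relMatrix, of_apply, filter_filter]
    refine sum_congr rfl fun y _ => ?_
    split_ifs with hxy
    · rw [one_mul]
      congr 1
      ext g
      simp only [mem_filter, mem_univ, true_and]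
      constructor
      · rintro ⟨⟨-, h⟩, rfl⟩
        exact ⟨rfl, h⟩
      · rintro ⟨rfl, h⟩
        exact ⟨⟨hxy, h⟩, rfl⟩
    · rw [zero_mul, card_eq_zero, filter_eq_empty_iff]
      rintro g - ⟨⟨hx, -⟩, rfl⟩
      exact hxy hx

end RelChain

section OverlapChain

variable {α : Type*} [DecidableEq α]

-- The other entries are then nonempty too, since they meet their successors.
def IsOverlapChain {k : ℕ} (f : Fin (k + 1) → Finset α) : Prop :=
  IsRelChain (fun S T : Finset α => (S ∩ T).Nonempty) f ∧ (f (Fin.last k)).Nonempty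

lemma IsOverlapChain.nonempty {k : ℕ} {f : Fin (k + 1) → Finset α} (h : IsOverlapChain f)
    (t : Fin (k + 1)) : (f t).Nonempty := by
  induction t using Fin.lastCases with
  | last => exact h.2
  | cast t => exact (h.1 t).mono inter_subset_left

variable [Fintype α]

theorem card_inter_nonempty_of_card_eq (S : Finset α) (r : ℕ) :
    #{T : Finset α | (S ∩ T).Nonempty ∧ #T = r} =
      (Fintype.card α).choose r - (Fintype.card α - #S).choose r := by
  have hall : #{T : Finset α | #T = r} = (Fintype.card α).choose r := by simp
  have hdisj : #{T : Finset α | #T = r ∧ ¬ (S ∩ T).Nonempty} =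
      (Fintype.card α - #S).choose r := by
    rw [← card_compl, ← card_powersetCard]
    congr 1; ext T
    simp [not_nonempty_iff_eq_empty, ← disjoint_iff_inter_eq_empty,
      subset_compl_iff_disjoint_left, and_comm]
  have hsplit := card_filter_add_card_filter_not (s := ({T : Finset α | #T = r} : Finset _))
    (fun T => (S ∩ T).Nonempty)
  simp only [filter_filter, hall, hdisj] at hsplit
  rw [← hsplit, Nat.add_sub_cancel]
  congr 1; ext T; simp [and_comm]

end OverlapChain

lemma Tmat_apply (m : ℕ) (i j : Fin m) :
    Tmat m i j = m.choose (j.1 + 1) - (m - (i.1 + 1)).choose (j.1 + 1) := by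
  unfold Tmat
  split_ifs with h
  · rfl
  · rw [Nat.choose_eq_zero_of_lt (n := m - (i.1 + 1)) (k := j.1 + 1) (by omega), Nat.sub_zero]

def sizeMatrix (m : ℕ) : Matrix (Finset (Fin m)) (Fin m) ℕ :=
  of fun S i => if #S = i.1 + 1 then 1 else 0

lemma card_sub_one_lt {m : ℕ} {S : Finset (Fin m)} (hS : S.Nonempty) : #S - 1 < m := by
  have := card_le_univ S
  rw [Fintype.card_fin] at this
  have := hS.card_pos
  omega

lemma sum_sizeMatrix_mul {m : ℕ} {S : Finset (Fin m)} (hS : S.Nonempty) (g : Fin m → ℕ) :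
    ∑ i, sizeMatrix m S i * g i = g ⟨#S - 1, card_sub_one_lt hS⟩ := by
  have := hS.card_pos
  rw [sum_eq_single ⟨#S - 1, card_sub_one_lt hS⟩]
  · simp only [sizeMatrix, of_apply]
    rw [if_pos (by omega), one_mul]
  · intro j _ hj
    simp only [sizeMatrix, of_apply]
    rw [if_neg fun h => hj (Fin.ext (by simp only; omega)), zero_mul]
  · simp

lemma sizeMatrix_mulVec_one (m : ℕ) :
    sizeMatrix m *ᵥ (fun _ => 1) = fun S => if S.Nonempty then 1 else 0 := by
  funext S
  rcases S.eq_empty_or_nonempty with rfl | hS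
  · simp [sizeMatrix, mulVec, dotProduct]
  · simpa [mulVec, dotProduct, hS] using sum_sizeMatrix_mul hS fun _ => 1

theorem relMatrix_overlap_mul_sizeMatrix (m : ℕ) :
    relMatrix (fun S T : Finset (Fin m) => (S ∩ T).Nonempty) * sizeMatrix m =
      sizeMatrix m * Tmat m := by
  ext S i
  have hlhs : (relMatrix (fun S T : Finset (Fin m) => (S ∩ T).Nonempty) * sizeMatrix m) S i =
      m.choose (i.1 + 1) - (m - #S).choose (i.1 + 1) := by
    have hcount := card_inter_nonempty_of_card_eq S (i.1 + 1)
    rw [Fintype.card_fin] at hcount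
    rw [← hcount, card_filter, mul_apply]
    refine sum_congr rfl fun T _ => ?_
    simp only [relMatrix, sizeMatrix, of_apply]
    split_ifs <;> simp_all
  rw [hlhs, mul_apply]
  rcases S.eq_empty_or_nonempty with rfl | hS
  · simp [sizeMatrix]
  · rw [sum_sizeMatrix_mul hS (Tmat m · i), Tmat_apply, Nat.sub_add_cancel hS.card_pos]

theorem pow_mul_eq_mul_pow_of_mul_eq {ι κ R : Type*} [Fintype ι] [Fintype κ] [DecidableEq ι]
    [DecidableEq κ] [Semiring R] {A : Matrix ι ι R} {P : Matrix ι κ R} {T : Matrix κ κ R}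
    (h : A * P = P * T) (k : ℕ) : A ^ k * P = P * T ^ k := by
  induction k with
  | zero => simp
  | succ k ih =>
    rw [pow_succ, Matrix.mul_assoc, h, ← Matrix.mul_assoc, ih, Matrix.mul_assoc, pow_succ]

theorem card_isOverlapChain (m k : ℕ) :
    #{f : Fin (k + 1) → Finset (Fin m) | IsOverlapChain f} =
      ∑ i : Fin m, ∑ j : Fin m, m.choose (i.1 + 1) * (Tmat m ^ k) i j := by
  set A := relMatrix (fun S T : Finset (Fin m) => (S ∩ T).Nonempty)
  calc #{f : Fin (k + 1) → Finset (Fin m) | IsOverlapChain f}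
      = ∑ S, #{f : Fin (k + 1) → Finset (Fin m) | f 0 = S ∧
          IsRelChain (fun S T : Finset (Fin m) => (S ∩ T).Nonempty) f ∧
            (f (Fin.last k)).Nonempty} := by
        rw [card_eq_sum_card_fiberwise (f := fun f => f 0) (t := univ) (fun _ _ => mem_univ _)]
        refine sum_congr rfl fun S _ => congrArg card ?_
        ext f
        simp [IsOverlapChain, and_comm]
    _ = ∑ S, (A ^ k *ᵥ fun S => if S.Nonempty then 1 else 0) S :=
        sum_congr rfl fun S _ => card_isRelChain_eq_pow_mulVec _ _ k S
    _ = ∑ S, (sizeMatrix m *ᵥ (Tmat m ^ k *ᵥ fun _ => 1)) S := by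
        rw [← sizeMatrix_mulVec_one, mulVec_mulVec, pow_mul_eq_mul_pow_of_mul_eq
          (relMatrix_overlap_mul_sizeMatrix m), ← mulVec_mulVec]
    _ = _ := by
        have hsize (i : Fin m) : ∑ S, sizeMatrix m S i = m.choose (i.1 + 1) := by
          simp [sizeMatrix]
        simp only [mulVec, dotProduct, mul_one, ← hsize, sum_mul, mul_sum]
        rw [sum_comm]
        exact sum_congr rfl fun _ _ => sum_comm

section Columns

variable {α : Type*} [DecidableEq α] {n : ℕ}

def rowsAt (C : Finset (α × Fin n)) (j : ℕ) : Finset α :=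
  (C.filter fun x => (x.2 : ℕ) = j).image Prod.fst

@[simp]
lemma mem_rowsAt {C : Finset (α × Fin n)} {j : ℕ} {i : α} :
    i ∈ rowsAt C j ↔ ∃ x ∈ C, x.1 = i ∧ (x.2 : ℕ) = j := by
  simp only [rowsAt, mem_image, mem_filter]
  exact ⟨fun ⟨x, ⟨hx, hj⟩, hi⟩ => ⟨x, hx, hi, hj⟩,
    fun ⟨x, hx, hi, hj⟩ => ⟨x, ⟨hx, hj⟩, hi⟩⟩

lemma rowsAt_nonempty {C : Finset (α × Fin n)} {j : ℕ} :
    (rowsAt C j).Nonempty ↔ ∃ x ∈ C, (x.2 : ℕ) = j := by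
  simp only [Finset.Nonempty, mem_rowsAt]
  exact ⟨fun ⟨_, x, hx, _, hj⟩ => ⟨x, hx, hj⟩,
    fun ⟨x, hx, hj⟩ => ⟨x.1, x, hx, rfl, hj⟩⟩

lemma IsConnSet.rowsAt_inter_nonempty {C : Finset (α × Fin n)}
    (hC : IsConnSet ((⊤ : SimpleGraph α) □ pathGraph n) C) {p q : α × Fin n} (hp : p ∈ C)
    (hq : q ∈ C) {j : ℕ} (hpj : (p.2 : ℕ) ≤ j) (hjq : j < q.2) :
    (rowsAt C j ∩ rowsAt C (j + 1)).Nonempty := by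
  obtain ⟨w⟩ := hC.2.preconnected ⟨p, hp⟩ ⟨q, hq⟩
  obtain ⟨d, -, hd₁, hd₂⟩ :=
    w.exists_boundary_dart {x | (x.1.2 : ℕ) ≤ j} hpj (not_le.2 hjq)
  simp only [Set.mem_ofPred_eq, not_le] at hd₁ hd₂
  have hadj : ((⊤ : SimpleGraph α) □ pathGraph n).Adj d.fst d.snd := d.adj
  rw [boxProd_adj, pathGraph_adj] at hadj
  rcases hadj with ⟨-, hcol⟩ | ⟨hstep | hstep, hrow⟩
  · rw [hcol] at hd₁; omega
  · exact ⟨d.fst.1.1, mem_inter.2 ⟨mem_rowsAt.2 ⟨_, d.fst.2, rfl, by omega⟩,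
      mem_rowsAt.2 ⟨_, d.snd.2, hrow.symm, by omega⟩⟩⟩
  · omega

variable {C : Finset (α × Fin n)}

lemma reachable_of_snd_eq (x y : (C : Set (α × Fin n))) (h : x.1.2 = y.1.2) :
    (((⊤ : SimpleGraph α) □ pathGraph n).induce (C : Set (α × Fin n))).Reachable x y := by
  by_cases hxy : x = y
  · rw [hxy]
  · refine Adj.reachable ?_
    show ((⊤ : SimpleGraph α) □ pathGraph n).Adj x.1 y.1
    exact boxProd_adj.2 (Or.inl ⟨fun h' => hxy (Subtype.ext (Prod.ext h' h)), h⟩)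

lemma reachable_of_rowsAt_inter_nonempty
    (hcross : ∀ p ∈ C, ∀ q ∈ C, ∀ j : ℕ, (p.2 : ℕ) ≤ j → j < q.2 →
      (rowsAt C j ∩ rowsAt C (j + 1)).Nonempty)
    (x y : (C : Set (α × Fin n))) (hxy : (x.1.2 : ℕ) ≤ y.1.2) :
    (((⊤ : SimpleGraph α) □ pathGraph n).induce (C : Set (α × Fin n))).Reachable x y := by
  obtain ⟨d, hd⟩ := Nat.exists_eq_add_of_le hxy
  induction d generalizing x with
  | zero => exact reachable_of_snd_eq x y (Fin.ext hd.symm)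
  | succ d ih =>
    obtain ⟨i, hi⟩ := hcross x.1 x.2 y.1 y.2 x.1.2 le_rfl (by omega)
    obtain ⟨⟨u, hu, hui, huj⟩, ⟨v, hv, hvi, hvj⟩⟩ :=
      And.imp mem_rowsAt.1 mem_rowsAt.1 (mem_inter.1 hi)
    have hxu := reachable_of_snd_eq x ⟨u, hu⟩ (Fin.ext huj.symm)
    have huv : (((⊤ : SimpleGraph α) □ pathGraph n).induce (C : Set (α × Fin n))).Adj
        ⟨u, hu⟩ ⟨v, hv⟩ := by
      show ((⊤ : SimpleGraph α) □ pathGraph n).Adj u v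
      exact boxProd_adj.2 (Or.inr ⟨pathGraph_adj.2 (Or.inl (by omega)), hui.trans hvi.symm⟩)
    have hvy := ih ⟨v, hv⟩ (by simp only; omega) (by simp only; omega)
    exact hxu.trans (huv.reachable.trans hvy)

theorem isConnSet_boxProd_pathGraph_iff :
    IsConnSet ((⊤ : SimpleGraph α) □ pathGraph n) C ↔ C.Nonempty ∧
      ∀ p ∈ C, ∀ q ∈ C, ∀ j : ℕ, (p.2 : ℕ) ≤ j → j < q.2 →
        (rowsAt C j ∩ rowsAt C (j + 1)).Nonempty := by
  refine ⟨fun hC => ⟨hC.1, fun p hp q hq j => hC.rowsAt_inter_nonempty hp hq⟩,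
    fun ⟨hne, hcross⟩ => ⟨hne, (connected_iff _).2 ⟨fun x y => ?_, hne.coe_sort⟩⟩⟩
  rcases le_total (x.1.2 : ℕ) y.1.2 with h | h
  · exact reachable_of_rowsAt_inter_nonempty hcross x y h
  · exact (reachable_of_rowsAt_inter_nonempty hcross y x h).symm

end Columns

section Span

variable {α : Type*} [DecidableEq α] {n : ℕ}

def colSpan (C : Finset (α × Fin n)) : ℕ × ℕ :=
  if h : C.Nonempty then
    let a := C.inf' h fun x => (x.2 : ℕ)
    (a, C.sup' h (fun x => (x.2 : ℕ)) - a)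
  else (0, 0)

theorem colSpan_eq_iff {C : Finset (α × Fin n)} (hC : C.Nonempty) {a k : ℕ} :
    colSpan C = (a, k) ↔ (∀ x ∈ C, a ≤ x.2 ∧ (x.2 : ℕ) ≤ a + k) ∧
      (rowsAt C a).Nonempty ∧ (rowsAt C (a + k)).Nonempty := by
  simp only [colSpan, dif_pos hC, Prod.mk.injEq, rowsAt_nonempty]
  obtain ⟨p, hp, hlo⟩ := C.exists_mem_eq_inf' hC (fun x => (x.2 : ℕ))
  obtain ⟨q, hq, hhi⟩ := C.exists_mem_eq_sup' hC (fun x => (x.2 : ℕ))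
  have hbounds : ∀ x ∈ C, (p.2 : ℕ) ≤ x.2 ∧ (x.2 : ℕ) ≤ q.2 := fun x hx =>
    ⟨hlo ▸ C.inf'_le _ hx, hhi ▸ C.le_sup' (fun x => (x.2 : ℕ)) hx⟩
  rw [hlo, hhi]
  constructor
  · rintro ⟨rfl, rfl⟩
    refine ⟨fun x hx => ?_, ⟨p, hp, rfl⟩, ⟨q, hq, ?_⟩⟩
    · have := hbounds x hx; omega
    · have := hbounds p hp; omega
  · rintro ⟨hbound, ⟨p', hp', rfl⟩, ⟨q', hq', hq'k⟩⟩
    have := hbounds p' hp'; have := hbounds q' hq'; have := hbound p hp; have := hbound q hq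
    omega

lemma colSpan_add_lt {C : Finset (α × Fin n)} (hC : C.Nonempty) :
    (colSpan C).1 + (colSpan C).2 < n := by
  obtain ⟨-, -, hlast⟩ := (colSpan_eq_iff hC).1 rfl
  obtain ⟨x, -, hx⟩ := rowsAt_nonempty.1 hlast
  exact hx ▸ x.2.isLt

variable [Fintype α]

def place (a : ℕ) {k : ℕ} (f : Fin (k + 1) → Finset α) : Finset (α × Fin n) :=
  {x | ∃ t : Fin (k + 1), a + t = x.2 ∧ x.1 ∈ f t}

@[simp]
lemma mem_place {a k : ℕ} {f : Fin (k + 1) → Finset α} {x : α × Fin n} :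
    x ∈ place a f ↔ ∃ t : Fin (k + 1), a + t = x.2 ∧ x.1 ∈ f t := by
  simp [place]

lemma rowsAt_place (a : ℕ) {k : ℕ} (f : Fin (k + 1) → Finset α) (t : Fin (k + 1))
    (h : a + t < n) : rowsAt (place (n := n) a f) (a + t) = f t := by
  ext i
  simp only [mem_rowsAt, mem_place]
  constructor
  · rintro ⟨x, ⟨t', ht', hx⟩, rfl, hxt⟩
    rwa [Fin.ext (by omega : (t' : ℕ) = t)] at hx
  · exact fun hi => ⟨(i, ⟨a + t, h⟩), ⟨t, rfl, hi⟩, rfl, rfl⟩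

lemma place_rowsAt {C : Finset (α × Fin n)} {a k : ℕ}
    (hC : ∀ x ∈ C, a ≤ x.2 ∧ (x.2 : ℕ) ≤ a + k) :
    place a (fun t : Fin (k + 1) => rowsAt C (a + t)) = C := by
  ext x
  simp only [mem_place, mem_rowsAt]
  constructor
  · rintro ⟨t, ht, y, hy, hyx, hyt⟩
    rwa [Prod.ext hyx (Fin.ext (hyt.trans ht))] at hy
  · intro hx
    have := hC x hx
    exact ⟨⟨x.2 - a, by omega⟩, by simp only; omega, x, hx, rfl, by simp only; omega⟩

end Span

section Count

variable {α : Type*} [DecidableEq α] {n : ℕ}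

lemma isOverlapChain_rowsAt {C : Finset (α × Fin n)}
    (hC : IsConnSet ((⊤ : SimpleGraph α) □ pathGraph n) C) {a k : ℕ}
    (hspan : colSpan C = (a, k)) : IsOverlapChain fun t : Fin (k + 1) => rowsAt C (a + t) := by
  obtain ⟨-, hfirst, hlast⟩ := (colSpan_eq_iff hC.1).1 hspan
  obtain ⟨p, hp, hpa⟩ := rowsAt_nonempty.1 hfirst
  obtain ⟨q, hq, hqk⟩ := rowsAt_nonempty.1 hlast
  refine ⟨fun t => ?_, by simpa using hlast⟩
  simpa [add_assoc] using hC.rowsAt_inter_nonempty hp hq (j := a + t) (by omega) (by omega)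

variable [Fintype α] {a k : ℕ} {f : Fin (k + 1) → Finset α}

lemma isConnSet_place (hf : IsOverlapChain f) (h : a + k < n) :
    IsConnSet ((⊤ : SimpleGraph α) □ pathGraph n) (place a f) := by
  have hrows (t : Fin (k + 1)) := rowsAt_place (n := n) a f t (by omega)
  rw [isConnSet_boxProd_pathGraph_iff]
  refine ⟨?_, fun p hp q hq j hpj hjq => ?_⟩
  · obtain ⟨x, hx, -⟩ := rowsAt_nonempty.1 ((hrows 0).symm ▸ hf.nonempty 0)
    exact ⟨x, hx⟩
  · obtain ⟨t, ht, -⟩ := mem_place.1 hp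
    obtain ⟨t', ht', -⟩ := mem_place.1 hq
    obtain ⟨s, rfl⟩ : ∃ s, j = a + s := ⟨j - a, by omega⟩
    have hs : s < k := by omega
    have := hf.1 ⟨s, hs⟩
    rw [← hrows, ← hrows] at this
    simpa [add_assoc] using this

lemma colSpan_place (hf : IsOverlapChain f) (h : a + k < n) :
    colSpan (place (n := n) a f) = (a, k) := by
  have hrows (t : Fin (k + 1)) := rowsAt_place (n := n) a f t (by omega)
  rw [colSpan_eq_iff (isConnSet_place hf h).1]
  refine ⟨fun x hx => ?_, ?_, ?_⟩
  · obtain ⟨t, ht, -⟩ := mem_place.1 hx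
    omega
  · simpa using (hrows 0).symm ▸ hf.nonempty 0
  · simpa using (hrows (Fin.last k)).symm ▸ hf.2

theorem card_isConnSet_colSpan_eq (h : a + k < n) :
    #{C : Finset (α × Fin n) | IsConnSet ((⊤ : SimpleGraph α) □ pathGraph n) C ∧
      colSpan C = (a, k)} = #{f : Fin (k + 1) → Finset α | IsOverlapChain f} := by
  refine card_nbij' (fun C t => rowsAt C (a + t)) (place a) ?_ ?_ ?_ ?_
  · intro C hC
    simp only [coe_filter, mem_univ, true_and, Set.mem_ofPred_eq] at hC ⊢
    exact isOverlapChain_rowsAt hC.1 hC.2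
  · intro f hf
    simp only [coe_filter, mem_univ, true_and, Set.mem_ofPred_eq] at hf ⊢
    exact ⟨isConnSet_place hf h, colSpan_place hf h⟩
  · intro C hC
    simp only [coe_filter, mem_univ, true_and, Set.mem_ofPred_eq] at hC
    exact place_rowsAt ((colSpan_eq_iff hC.1.1).1 hC.2).1
  · intro f _
    funext t
    exact rowsAt_place a f t (by omega)

theorem card_isConnSet_boxProd_pathGraph :
    #{C : Finset (α × Fin n) | IsConnSet ((⊤ : SimpleGraph α) □ pathGraph n) C} =
      ∑ k ∈ range n, (n - k) * #{f : Fin (k + 1) → Finset α | IsOverlapChain f} := by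
  set conn : Finset (Finset (α × Fin n)) :=
    {C | IsConnSet ((⊤ : SimpleGraph α) □ pathGraph n) C}
  have hmaps : ∀ C ∈ conn, colSpan C ∈ range n ×ˢ range n := by
    intro C hC
    have := colSpan_add_lt (mem_filter.1 hC).2.1
    simp only [mem_product, mem_range]
    omega
  rw [card_eq_sum_card_fiberwise hmaps, sum_product, sum_comm]
  refine sum_congr rfl fun k _ => ?_
  have hfiber (a : ℕ) : #{C ∈ conn | colSpan C = (a, k)} =
      if a + k < n then #{f : Fin (k + 1) → Finset α | IsOverlapChain f} else 0 := by
    split_ifs with h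
    · rw [filter_filter]
      exact card_isConnSet_colSpan_eq h
    · rw [card_eq_zero, filter_eq_empty_iff]
      intro C hC hspan
      have := colSpan_add_lt (mem_filter.1 hC).2.1
      rw [hspan] at this
      exact h this
  have hcount : #{a ∈ range n | a + k < n} = n - k := by
    rw [← card_range (n - k)]
    congr 1
    ext a
    simp only [mem_filter, mem_range]
    omega
  rw [sum_congr rfl fun a _ => hfiber a, ← sum_filter, sum_const, smul_eq_mul, hcount]

end Count

lemma numConnSets_eq_card {V : Type*} [Fintype V] (G : SimpleGraph V) :
    numConnSets G = #{C : Finset V | IsConnSet G C} := by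
  rw [numConnSets, ← Set.ncard_coe_finset, coe_filter]
  simp

theorem statement7_general (m n : ℕ) :
    numConnSets ((⊤ : SimpleGraph (Fin m)) □ pathGraph n) =
      ∑ k ∈ Finset.Icc 1 n, (n - k + 1) *
        (∑ i : Fin m, ∑ j : Fin m,
          Nat.choose m (i.1 + 1) * (Tmat m ^ (k - 1)) i j) := by
  rw [numConnSets_eq_card, card_isConnSet_boxProd_pathGraph]
  refine sum_nbij' (· + 1) (· - 1) ?_ ?_ ?_ ?_ fun k hk => ?_
  · intro k hk; simp only [mem_range, mem_Icc] at hk ⊢; omega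
  · intro k hk; simp only [mem_range, mem_Icc] at hk ⊢; omega
  · intro k _; simp
  · intro k hk; simp only [mem_Icc] at hk; omega
  · rw [mem_range] at hk
    rw [card_isOverlapChain, Nat.add_sub_cancel, Nat.sub_add_eq, Nat.sub_add_cancel (by omega)]

/-- For positive integers `m, n`,
`N(K_m×P_n) = Σ_{k=1}^{n} (n−k+1)·([C(m,1),…,C(m,m)]·T^{k−1}·1)`. -/
theorem statement7 (m n : ℕ) (hm : 0 < m) (hn : 0 < n) :
    numConnSets ((⊤ : SimpleGraph (Fin m)) □ pathGraph n) =
      ∑ k ∈ Finset.Icc 1 n, (n - k + 1) *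
        (∑ i : Fin m, ∑ j : Fin m,
          Nat.choose m (i.1 + 1) * (Tmat m ^ (k - 1)) i j) :=
  statement7_general m n
end

section
/- For any positive integers m, n and any i ∈ {1,…,m}: (a) for every i-element subset X of I_n, the number of sets C ∈ C_{m,n} with C∩I_n = X equals f_{m,n}^i (i.e., this count is independent of the choice of the i-element subset X of the last column); and (b) |C_{m,n}| = Σ_{i=1}^{m} C(m,i)·f_{m,n}^i, where C(m,i) is the binomial coefficient. -/
open SimpleGraph Finset
open scoped Classical

/-- The cycle `C_m` on `Fin m`, labelled as in the paper: `i` is adjacent to `i'` iff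
`|i − i'| = 1` or `{i, i'} = {first, last}` (0-indexed: `{0, m−1}`). -/
def cycleRow (m : ℕ) : SimpleGraph (Fin m) :=
  SimpleGraph.fromRel (fun i i' => i'.1 = i.1 + 1 ∨ (i.1 = 0 ∧ i'.1 = m - 1))

/-- `C_{m,n}`: the connected sets of `K_m×P_n` containing at least one vertex of each
column. -/
def Cmn (m n : ℕ) : Set (Finset (Fin m × Fin n)) :=
  {C | IsConnSet ((⊤ : SimpleGraph (Fin m)) □ pathGraph n) C ∧
       ∀ j : Fin n, (C.filter (fun p => p.2 = j)).Nonempty}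

/-- `C'_{m,n}`: the vertex subsets that are connected sets of `K_m×P_n` but not
connected sets of `C_m×P_n` and contain at least one vertex of each column. -/
def Cmn' (m n : ℕ) : Set (Finset (Fin m × Fin n)) :=
  {C | IsConnSet ((⊤ : SimpleGraph (Fin m)) □ pathGraph n) C ∧
       ¬ IsConnSet (cycleRow m □ pathGraph n) C ∧
       ∀ j : Fin n, (C.filter (fun p => p.2 = j)).Nonempty}

/-- `N(K_m×P_n; X)`: the number of `C ∈ C_{m,n}` with `C∩I_j = X∩I_j` for every
column `I_j` with `X∩I_j ≠ ∅`. -/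
noncomputable def Ncount (m n : ℕ) (X : Finset (Fin m × Fin n)) : ℕ :=
  {C | C ∈ Cmn m n ∧ ∀ j : Fin n,
      (X.filter (fun p => p.2 = j)).Nonempty →
      C.filter (fun p => p.2 = j) = X.filter (fun p => p.2 = j)}.ncard

/-- `N'(K_m×P_n; X)`: the number of `C ∈ C'_{m,n}` with `C∩I_j = X∩I_j` for every
column `I_j` with `X∩I_j ≠ ∅`. -/
noncomputable def N' (m n : ℕ) (X : Finset (Fin m × Fin n)) : ℕ :=
  {C | C ∈ Cmn' m n ∧ ∀ j : Fin n,
      (X.filter (fun p => p.2 = j)).Nonempty →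
      C.filter (fun p => p.2 = j) = X.filter (fun p => p.2 = j)}.ncard

/-- `f_{m,n}^i`: the number of sets in `C_{m,n}` whose intersection with the last column
equals the fixed `i`-element set `{v_{1,n},…,v_{i,n}}`. -/
noncomputable def fval (m n : ℕ) (hn : 0 < n) (i : ℕ) : ℕ :=
  {C : Finset (Fin m × Fin n) | C ∈ Cmn m n ∧
    C.filter (fun p => p.2 = (⟨n - 1, by omega⟩ : Fin n)) =
      (Finset.univ.filter (fun q : Fin m => q.1 < i)).image
        (fun q => (q, (⟨n - 1, by omega⟩ : Fin n)))}.ncard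

/-- `R` is (the vertex set of) a connected component of the subgraph of `H` induced by
`S`: `R` is a nonempty subset of `S`, `H[R]` is connected, and there is no edge of `H`
between `R` and `S \ R`. -/
def IsCompOf {W : Type*} (H : SimpleGraph W) (R S : Finset W) : Prop :=
  R ⊆ S ∧ R.Nonempty ∧ (H.induce (R : Set W)).Connected ∧
  ∀ x ∈ R, ∀ y ∈ S, y ∉ R → ¬ H.Adj x y

/-- `k(H[S])`: the number of connected components of the subgraph of `H` induced by `S`. -/
noncomputable def kcomp {W : Type*} (H : SimpleGraph W) (S : Finset W) : ℕ :=
  Nat.card (H.induce (S : Set W)).ConnectedComponent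

/-! Permuting the rows of `K_m × P_n` is a graph automorphism that fixes every column
setwise, so it maps `C_{m,n}` onto itself, and on the last column it realises every
permutation of `K_m`; since permutations act transitively on the `i`-subsets, the number of
`C ∈ C_{m,n}` with a prescribed trace on the last column depends only on the size of that
trace. Part (b) then follows by splitting `C_{m,n}` according to this trace, which is never
empty. -/

theorem Finset.exists_perm_map_eq_of_card_eq {α : Type*} {X Y : Finset α}
    (h : X.card = Y.card) : ∃ σ : Equiv.Perm α, X.map σ.toEmbedding = Y := by
  have := Set.powersetCard.isPretransitive (α := α) (n := Y.card)
  obtain ⟨σ, hσ⟩ := MulAction.exists_smul_eq (Equiv.Perm α)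
    (⟨X, h⟩ : Set.powersetCard α Y.card) ⟨Y, rfl⟩
  refine ⟨σ, ?_⟩
  have := congrArg Subtype.val hσ
  simpa [Finset.smul_finset_def, Finset.map_eq_image] using this

def SimpleGraph.Iso.boxProd {α α' β β' : Type*} {G : SimpleGraph α} {G' : SimpleGraph α'}
    {H : SimpleGraph β} {H' : SimpleGraph β'} (φ : G ≃g G') (ψ : H ≃g H') :
    (G □ H) ≃g (G' □ H') where
  toEquiv := φ.toEquiv.prodCongr ψ.toEquiv
  map_rel_iff' := by simp [SimpleGraph.boxProd_adj, SimpleGraph.Iso.map_adj_iff]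

theorem isConnSet_map_iso_iff {V W : Type*} {G : SimpleGraph V} {G' : SimpleGraph W}
    (φ : G ≃g G') (C : Finset V) :
    IsConnSet G' (C.map φ.toEquiv.toEmbedding) ↔ IsConnSet G C := by
  have hbij : Set.BijOn φ C (C.map φ.toEquiv.toEmbedding : Set W) := by
    rw [Finset.coe_map]; exact φ.injective.injOn.bijOn_image
  exact and_congr Finset.map_nonempty (φ.induce hbij).connected_iff.symm

section Columns

variable {α β : Type*} [Fintype α] [DecidableEq α] [DecidableEq β]

def colSection (C : Finset (α × β)) (t : β) : Finset α := {a | (a, t) ∈ C}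

theorem filter_snd_eq_image_iff {C : Finset (α × β)} {t : β} {X : Finset α} :
    C.filter (fun p => p.2 = t) = X.image (fun a => (a, t)) ↔ colSection C t = X := by
  constructor
  · rintro h
    ext a
    simpa [colSection] using congrArg ((a, t) ∈ ·) h
  · rintro rfl
    ext ⟨a, b⟩
    simp only [colSection, Finset.mem_filter, Finset.mem_image, Finset.mem_univ, true_and,
      Prod.mk.injEq]
    constructor
    · rintro ⟨h, rfl⟩; exact ⟨a, h, rfl, rfl⟩
    · rintro ⟨a, h, rfl, rfl⟩; exact ⟨h, rfl⟩

theorem colSection_map_prodCongr (σ : Equiv.Perm α) (C : Finset (α × β)) (t : β) :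
    colSection (C.map (σ.prodCongr (Equiv.refl β)).toEmbedding) t =
      (colSection C t).map σ.toEmbedding := by
  ext a
  simp [colSection]

end Columns

section RowPermutation

variable {m n : ℕ}

def rowPerm (σ : Equiv.Perm (Fin m)) :
    ((⊤ : SimpleGraph (Fin m)) □ pathGraph n) ≃g
      ((⊤ : SimpleGraph (Fin m)) □ pathGraph n) :=
  (Iso.completeGraph σ).boxProd .refl

theorem rowPerm_toEquiv (σ : Equiv.Perm (Fin m)) :
    (rowPerm σ (n := n)).toEquiv = σ.prodCongr (Equiv.refl (Fin n)) := rfl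

theorem map_rowPerm_mem_Cmn_iff (σ : Equiv.Perm (Fin m)) (C : Finset (Fin m × Fin n)) :
    C.map (rowPerm σ).toEquiv.toEmbedding ∈ Cmn m n ↔ C ∈ Cmn m n := by
  refine and_congr (isConnSet_map_iso_iff _ C) (forall_congr' fun j => ?_)
  rw [Finset.filter_map, Finset.map_nonempty]
  rfl

def cmnWithColSection (m n : ℕ) (t : Fin n) (X : Finset (Fin m)) :
    Set (Finset (Fin m × Fin n)) :=
  {C | C ∈ Cmn m n ∧ colSection C t = X}

theorem cmnWithColSection_eq_preimage (σ : Equiv.Perm (Fin m)) (t : Fin n) (X : Finset (Fin m)) :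
    cmnWithColSection m n t X =
      (rowPerm σ).toEquiv.finsetCongr ⁻¹' cmnWithColSection m n t (X.map σ.toEmbedding) := by
  ext C
  simp only [cmnWithColSection, Set.mem_preimage, Set.mem_ofPred_eq, Equiv.finsetCongr_apply,
    map_rowPerm_mem_Cmn_iff]
  rw [rowPerm_toEquiv, colSection_map_prodCongr, Finset.map_inj]

theorem ncard_cmnWithColSection_eq_of_card_eq {X Y : Finset (Fin m)} (h : X.card = Y.card)
    (t : Fin n) : (cmnWithColSection m n t X).ncard = (cmnWithColSection m n t Y).ncard := by
  obtain ⟨σ, rfl⟩ := Finset.exists_perm_map_eq_of_card_eq h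
  rw [cmnWithColSection_eq_preimage σ,
    Set.ncard_preimage_of_injective_subset_range (Equiv.injective _) (by simp)]

end RowPermutation

theorem setOf_filter_snd_eq_image {m n : ℕ} (t : Fin n) (X : Finset (Fin m)) :
    {C : Finset (Fin m × Fin n) | C ∈ Cmn m n ∧
      C.filter (fun p => p.2 = t) = X.image (fun q => (q, t))} = cmnWithColSection m n t X :=
  Set.ext fun _ => and_congr_right' filter_snd_eq_image_iff

theorem cmnWithColSection_empty (m n : ℕ) (t : Fin n) : cmnWithColSection m n t ∅ = ∅ := by
  refine Set.eq_empty_of_forall_notMem fun C ⟨hC, hempty⟩ => ?_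
  obtain ⟨⟨a, b⟩, hab⟩ := hC.2 t
  rw [Finset.mem_filter] at hab
  obtain ⟨hab, rfl⟩ := hab
  have : a ∈ colSection C b := by simpa [colSection] using hab
  simp [hempty] at this

theorem ncard_cmnWithColSection_eq_fval {m n : ℕ} (hn : 0 < n) (X : Finset (Fin m)) :
    (cmnWithColSection m n ⟨n - 1, by omega⟩ X).ncard = fval m n hn X.card := by
  rw [fval, setOf_filter_snd_eq_image]
  refine ncard_cmnWithColSection_eq_of_card_eq ?_ _
  rw [Fin.card_filter_val_lt, min_eq_right (by simpa using X.card_le_univ)]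

theorem fval_zero (m n : ℕ) (hn : 0 < n) : fval m n hn 0 = 0 := by
  have := ncard_cmnWithColSection_eq_fval hn (∅ : Finset (Fin m))
  rwa [cmnWithColSection_empty, Set.ncard_empty, Finset.card_empty, eq_comm] at this

theorem ncard_Cmn_eq_sum_ncard_cmnWithColSection (m n : ℕ) (t : Fin n) :
    (Cmn m n).ncard =
      ∑ X ∈ (Finset.univ : Finset (Fin m)).powerset, (cmnWithColSection m n t X).ncard := by
  rw [Set.ncard_eq_toFinset_card', Finset.card_eq_sum_card_fiberwise
    (f := fun C => colSection C t) (t := Finset.univ.powerset) (by simp)]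
  refine Finset.sum_congr rfl fun X _ => ?_
  rw [Set.ncard_eq_toFinset_card']
  congr 1
  ext C
  rw [Set.mem_toFinset]
  simp [cmnWithColSection]

/-- (a) For every `i`-element subset `X` of the last column of
`K_m×P_n`, the number of `C ∈ C_{m,n}` with `C∩I_n = X` equals `f_{m,n}^i`; and
(b) `|C_{m,n}| = Σ_{i=1}^{m} C(m,i)·f_{m,n}^i`. -/
theorem statement8 (m n i : ℕ) (hn : 0 < n) :
    (∀ X : Finset (Fin m), X.card = i →
      {C : Finset (Fin m × Fin n) | C ∈ Cmn m n ∧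
        C.filter (fun p => p.2 = (⟨n - 1, by omega⟩ : Fin n)) =
          X.image (fun q => (q, (⟨n - 1, by omega⟩ : Fin n)))}.ncard = fval m n hn i) ∧
    (Cmn m n).ncard = ∑ j ∈ Finset.Icc 1 m, Nat.choose m j * fval m n hn j := by
  refine ⟨fun X hX => ?_, ?_⟩
  · rw [setOf_filter_snd_eq_image, ncard_cmnWithColSection_eq_fval hn, hX]
  · rw [ncard_Cmn_eq_sum_ncard_cmnWithColSection m n ⟨n - 1, by omega⟩]
    simp only [ncard_cmnWithColSection_eq_fval hn]
    rw [Finset.sum_powerset_apply_card, Finset.card_univ, Fintype.card_fin, Finset.range_eq_Ico,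
      Finset.sum_eq_sum_Ico_succ_bot (Nat.succ_pos m), fval_zero, smul_zero, zero_add,
      zero_add, Nat.succ_eq_add_one, Finset.Ico_add_one_right_eq_Icc]
    simp only [smul_eq_mul]
end

section
/- For any positive integers m ≥ 3 and n ≥ 2, and any nonempty subset S_n of the last column I_n, N'(K_m×P_n; S_n) = Σ N'(K_m×P_n; S_n∪X), where the sum ranges over all nonempty subsets X of I_{n−1} with X∩S_{n−1} ≠ ∅, and S_{n−1} = {v_{i,n−1} : v_{i,n} ∈ S_n} is the set of vertices of I_{n−1} adjacent (in K_m×P_n) to vertices of S_n. -/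
open SimpleGraph Finset
open scoped Classical

/-!
Split the sets `C` counted by `N'(K_m×P_n; S_n)` according to their trace `X = C ∩ I_{n−1}`;
the part with trace `X` is exactly what `N'(K_m×P_n; S_n ∪ X)` counts. The trace is nonempty
because `C` meets every column, and it meets `S_{n−1}` because `C` is connected and meets `I_1`:
some edge of `C` leaves `I_n`, and the only edges leaving `I_n` are the vertical ones
`v_{i,n−1} v_{i,n}`, whose top end lies in `C ∩ I_n = S_n`.
-/

section Columns

variable {α β : Type*} [DecidableEq β]

def AgreesOnColumnsOf (Y C : Finset (α × β)) : Prop :=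
  ∀ j, (Y.filter (·.2 = j)).Nonempty → C.filter (·.2 = j) = Y.filter (·.2 = j)

lemma agreesOnColumnsOf_iff {Y C : Finset (α × β)} :
    AgreesOnColumnsOf Y C ↔
      ∀ j ∈ Y.image Prod.snd, C.filter (·.2 = j) = Y.filter (·.2 = j) := by
  simp [AgreesOnColumnsOf, Finset.filter_nonempty_iff]

lemma filter_snd_image_prodMk [DecidableEq α] (S : Finset α) (j j' : β) :
    (S.image (·, j)).filter (·.2 = j') = if j = j' then S.image (·, j) else ∅ := by
  split_ifs with h
  · subst h; exact filter_true_of_mem (by simp)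
  · exact filter_false_of_mem (by simp [h])

lemma agreesOnColumnsOf_column_iff [DecidableEq α] {S : Finset α} (hS : S.Nonempty) {j : β}
    {C : Finset (α × β)} :
    AgreesOnColumnsOf (S.image (·, j)) C ↔ C.filter (·.2 = j) = S.image (·, j) := by
  simp [agreesOnColumnsOf_iff, image_image, Function.comp_def, image_const hS,
    filter_snd_image_prodMk]

lemma agreesOnColumnsOf_two_columns_iff [DecidableEq α] {S X : Finset α} (hS : S.Nonempty)
    (hX : X.Nonempty) {j j' : β} (hj : j ≠ j') {C : Finset (α × β)} :
    AgreesOnColumnsOf (S.image (·, j) ∪ X.image (·, j')) C ↔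
      C.filter (·.2 = j) = S.image (·, j) ∧ C.filter (·.2 = j') = X.image (·, j') := by
  simp [agreesOnColumnsOf_iff, image_union, image_image, Function.comp_def, image_const hS,
    image_const hX, filter_union, filter_snd_image_prodMk, hj, hj.symm]

lemma image_fst_filter_snd_eq_iff [DecidableEq α] {C : Finset (α × β)} {j : β}
    {X : Finset α} :
    (C.filter (·.2 = j)).image Prod.fst = X ↔ C.filter (·.2 = j) = X.image (·, j) := by
  constructor
  · rintro rfl
    ext ⟨x, k⟩
    simp only [mem_filter, mem_image, Prod.mk.injEq]
    constructor
    · rintro ⟨hp, rfl⟩; exact ⟨x, ⟨(x, k), ⟨hp, rfl⟩, rfl⟩, rfl, rfl⟩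
    · rintro ⟨_, ⟨⟨y, _⟩, ⟨hq, rfl⟩, rfl⟩, rfl, rfl⟩; exact ⟨hq, rfl⟩
  · intro h
    rw [h, image_image]
    exact image_id'

end Columns

lemma IsConnSet.exists_vertical_edge_out_of_column {α β : Type*} {G : SimpleGraph α}
    {H : SimpleGraph β} {C : Finset (α × β)} (hC : IsConnSet (G □ H) C) {a : α} {j : β}
    (ha : (a, j) ∈ C) {v : α × β} (hv : v ∈ C) (hvj : v.2 ≠ j) :
    ∃ x k, H.Adj j k ∧ (x, j) ∈ C ∧ (x, k) ∈ C := by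
  obtain ⟨w⟩ := hC.2.preconnected ⟨(a, j), ha⟩ ⟨v, hv⟩
  obtain ⟨⟨⟨⟨⟨x, k⟩, hx⟩, ⟨⟨y, k'⟩, hy⟩⟩, hadj⟩, -, rfl, hk'⟩ :=
    w.exists_boundary_dart {p | p.1.2 = j} rfl hvj
  simp only [induce_adj, boxProd_adj] at hadj
  rcases hadj with ⟨-, hkk'⟩ | ⟨hkk', rfl⟩
  · exact (hk' hkk'.symm).elim
  · exact ⟨x, k', hkk', hx, hy⟩

lemma N'_eq_card_filter (m n : ℕ) (Y : Finset (Fin m × Fin n)) :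
    N' m n Y = #{C | C ∈ Cmn' m n ∧ AgreesOnColumnsOf Y C} := by
  rw [N', ← Set.ncard_coe_finset]
  simp only [coe_filter, mem_univ, true_and]
  rfl

lemma image_fst_filter_penultimate_inter_nonempty {m n : ℕ} {j k : Fin n} (hj : (j : ℕ) = n - 1)
    (hk : (k : ℕ) + 1 = j) {S : Finset (Fin m)} (hS : S.Nonempty) {C : Finset (Fin m × Fin n)}
    (hC : C ∈ Cmn' m n) (hlast : C.filter (·.2 = j) = S.image (·, j)) :
    ((C.filter (·.2 = k)).image Prod.fst ∩ S).Nonempty := by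
  obtain ⟨hconn, -, hcols⟩ := hC
  obtain ⟨s, hs⟩ := hS
  have hsC : (s, j) ∈ C := (mem_filter.1 (hlast ▸ mem_image_of_mem _ hs)).1
  obtain ⟨v, hv⟩ := hcols ⟨0, k.pos⟩
  obtain ⟨hvC, hv0⟩ := mem_filter.1 hv
  obtain ⟨x, k', hk', hxj, hxk'⟩ :=
    hconn.exists_vertical_edge_out_of_column hsC hvC (by simp [hv0, Fin.ext_iff]; omega)
  obtain rfl : k' = k := by
    rw [pathGraph_adj] at hk'
    ext; omega
  have hxS : x ∈ S := by
    have hx : (x, j) ∈ S.image (·, j) := hlast ▸ mem_filter.2 ⟨hxj, rfl⟩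
    simpa using hx
  exact ⟨x, mem_inter.2 ⟨mem_image.2 ⟨_, mem_filter.2 ⟨hxk', rfl⟩, rfl⟩, hxS⟩⟩

/-- For `m ≥ 3`, `n ≥ 2` and any nonempty subset `S_n` of the last
column `I_n`, `N'(K_m×P_n; S_n) = Σ N'(K_m×P_n; S_n∪X)`, the sum over all nonempty
subsets `X` of `I_{n−1}` with `X∩S_{n−1} ≠ ∅`, where `S_{n−1}` consists of the vertices
of `I_{n−1}` below the vertices of `S_n`. -/
theorem statement11 (m n : ℕ) (hn : 2 ≤ n)
    (S : Finset (Fin m)) (hS : S.Nonempty) :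
    N' m n (S.image (fun q => (q, (⟨n - 1, by omega⟩ : Fin n)))) =
      ∑ X ∈ (Finset.univ : Finset (Finset (Fin m))).filter
          (fun X => X.Nonempty ∧ (X ∩ S).Nonempty),
        N' m n (S.image (fun q => (q, (⟨n - 1, by omega⟩ : Fin n))) ∪
          X.image (fun q => (q, (⟨n - 2, by omega⟩ : Fin n)))) := by
  have hne : (⟨n - 1, by omega⟩ : Fin n) ≠ ⟨n - 2, by omega⟩ := by
    simp only [ne_eq, Fin.mk.injEq]; omega
  rw [N'_eq_card_filter, card_eq_sum_card_fiberwise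
    (f := fun C => (C.filter (·.2 = ⟨n - 2, by omega⟩)).image Prod.fst)]
  · refine sum_congr rfl fun X hX => ?_
    rw [N'_eq_card_filter, filter_filter]
    refine congrArg card (filter_congr fun C _ => ?_)
    rw [agreesOnColumnsOf_column_iff hS,
      agreesOnColumnsOf_two_columns_iff hS (mem_filter.1 hX).2.1 hne,
      image_fst_filter_snd_eq_iff, and_assoc]
  · intro C hC
    obtain ⟨hC, hlast⟩ := (mem_filter.1 hC).2
    rw [agreesOnColumnsOf_column_iff hS] at hlast
    exact mem_filter.2 ⟨mem_univ _, (hC.2.2 _).image _,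
      image_fst_filter_penultimate_inter_nonempty rfl (by simp only; omega) hS hC hlast⟩
end

section
/- Let m ≥ 3, n ≥ 3, and suppose some C ∈ C'_{m,n} satisfies C∩I_n = S_n and C∩I_{n−1} = T_{n−1}. If no connected component of the subgraph of C_m×P_n induced by S_n is a connected component of the subgraph of C_m×P_n induced by S_n∪T_{n−1}, and the subgraph of C_m×P_n induced by S_n∪T_{n−1} has the same number of connected components as the subgraph induced by T_{n−1}, then N'(K_m×P_n; S_n∪T_{n−1}) = N'(K_m×P_{n−1}; T_{n−1}). -/
open SimpleGraph Finset
open scoped Classical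

/-!
Shifting a set `B` of `K_m × P_{n-1}` into the first `n - 1` columns of `K_m × P_n` and adding
`S_n` is a bijection between the sets counted on the two sides: if `A` lies in the first `n - 1`
columns and meets column `n - 1` exactly in `T_{n-1}`, then `A ∪ S_n` is connected iff `A` is,
both in `K_m × P_n` and in `C_m × P_n`.
Since no component of `S_n` is a component of `S_n ∪ T_{n-1}`, every vertex of `S_n` reaches
`T_{n-1}` inside `S_n ∪ T_{n-1}`; this gives one direction. Conversely, a path in `A ∪ S_n` can
only leave `A` through `T_{n-1}`, and two vertices of `T_{n-1}` joined inside `S_n ∪ T_{n-1}` are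
already joined inside `T_{n-1}`: in `K_m × P_n` because a column is a clique, in `C_m × P_n`
because the map from components of `T_{n-1}` to components of `S_n ∪ T_{n-1}` is onto and, the
two numbers of components being equal, injective.
-/

namespace SimpleGraph

variable {V W : Type*} {G : SimpleGraph V} {G' : SimpleGraph W}

noncomputable def Embedding.induceImage (f : G ↪g G') (s : Set V) :
    G.induce s ≃g G'.induce (f '' s) where
  toEquiv := Equiv.Set.image f s f.injective
  map_rel_iff' := f.map_adj_iff

lemma Reachable.induce_mono {H : SimpleGraph V} {s t : Set V} (hGH : G ≤ H) (hst : s ⊆ t)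
    {u v : V} {hu : u ∈ s} {hv : v ∈ s} (h : (G.induce s).Reachable ⟨u, hu⟩ ⟨v, hv⟩) :
    (H.induce t).Reachable ⟨u, hst hu⟩ ⟨v, hst hv⟩ :=
  (h.map (G.induceHomOfLE hst).toHom).mono fun _ _ h => hGH h

lemma boxProd_mono_left {α β : Type*} {H H' : SimpleGraph α} (h : H ≤ H') (G : SimpleGraph β) :
    (H □ G) ≤ (H' □ G) := by
  intro x y hxy
  rw [boxProd_adj] at hxy ⊢
  exact hxy.imp_left fun h' => ⟨h h'.1, h'.2⟩

noncomputable def ConnectedComponent.toFinset {S : Finset V}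
    (c : (G.induce (S : Set V)).ConnectedComponent) : Finset V :=
  c.supp.toFinset.map (Function.Embedding.subtype _)

lemma ConnectedComponent.coe_toFinset {S : Finset V}
    (c : (G.induce (S : Set V)).ConnectedComponent) :
    (c.toFinset : Set V) = Subtype.val '' c.supp := by
  simp [ConnectedComponent.toFinset]

lemma ConnectedComponent.mem_toFinset {S : Finset V}
    {c : (G.induce (S : Set V)).ConnectedComponent} {x : V} :
    x ∈ c.toFinset ↔ ∃ hx : x ∈ S, (G.induce (S : Set V)).connectedComponentMk ⟨x, hx⟩ = c := by
  simp [ConnectedComponent.toFinset, ConnectedComponent.mem_supp_iff]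

lemma ConnectedComponent.isCompOf_toFinset {S : Finset V}
    (c : (G.induce (S : Set V)).ConnectedComponent) : IsCompOf G c.toFinset S := by
  refine ⟨fun x hx => (mem_toFinset.1 hx).1, ?_, ?_, ?_⟩
  · obtain ⟨⟨v, hv⟩, rfl⟩ := c.exists_rep
    exact ⟨v, mem_toFinset.2 ⟨hv, rfl⟩⟩
  · rw [c.coe_toFinset]
    exact ((Embedding.induce _).induceImage c.supp).connected_iff.1 c.connected_toSimpleGraph
  · rintro x hx y hy hyc hxy
    obtain ⟨hxS, rfl⟩ := mem_toFinset.1 hx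
    exact hyc (mem_toFinset.2 ⟨hy, (connectedComponentMk_eq_of_adj (G := G.induce _)
      (v := ⟨x, hxS⟩) (w := ⟨y, hy⟩) hxy).symm⟩)

lemma reachable_induce_of_kcomp_eq {s t : Finset V} (hst : s ⊆ t)
    (hreach : ∀ v (hv : v ∈ t), ∃ u, ∃ hu : u ∈ s,
      (G.induce ↑t).Reachable ⟨v, hv⟩ ⟨u, hst hu⟩)
    (hcard : kcomp G t = kcomp G s) {u v : V} (hu : u ∈ s) (hv : v ∈ s)
    (h : (G.induce ↑t).Reachable ⟨u, hst hu⟩ ⟨v, hst hv⟩) :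
    (G.induce ↑s).Reachable ⟨u, hu⟩ ⟨v, hv⟩ := by
  set φ := ConnectedComponent.map (G.induceHomOfLE (coe_subset.2 hst)).toHom
  have hsurj : Function.Surjective φ := by
    refine ConnectedComponent.ind fun ⟨w, hw⟩ => ?_
    obtain ⟨u, hu, hwu⟩ := hreach w hw
    refine ⟨(G.induce ↑s).connectedComponentMk ⟨u, hu⟩, ?_⟩
    exact (ConnectedComponent.sound hwu).symm
  have hinj := ((Nat.bijective_iff_surjective_and_card φ).2 ⟨hsurj, hcard.symm⟩).1
  exact ConnectedComponent.exact (hinj (ConnectedComponent.sound h))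

variable [DecidableEq V]

lemma exists_reachable_of_forall_not_isCompOf {S T : Finset V}
    (h : ∀ R, IsCompOf G R S → ¬ IsCompOf G R (S ∪ T)) {s : V} (hs : s ∈ S) :
    ∃ t, ∃ ht : t ∈ T,
      (G.induce ↑(S ∪ T)).Reachable ⟨s, by simp [hs]⟩ ⟨t, by simp [ht]⟩ := by
  set c := (G.induce (S : Set V)).connectedComponentMk ⟨s, hs⟩
  have hc := c.isCompOf_toFinset
  have hnot := h _ hc
  simp only [IsCompOf, hc.1.trans subset_union_left, hc.2.1, hc.2.2.1, true_and,
    not_forall, not_not] at hnot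
  obtain ⟨x, hx, y, hy, hyc, hxy⟩ := hnot
  obtain ⟨hxS, hcx⟩ := ConnectedComponent.mem_toFinset.1 hx
  have hyT : y ∈ T := by
    refine (mem_union.1 hy).resolve_left fun hyS => hc.2.2.2 x hx y hyS hyc hxy
  have hsx : (G.induce ↑(S ∪ T)).Reachable ⟨s, by simp [hs]⟩ ⟨x, by simp [hxS]⟩ :=
    Reachable.induce_mono le_rfl (by simp) (ConnectedComponent.exact hcx.symm)
  have hxy' : (G.induce ↑(S ∪ T)).Adj ⟨x, by simp [hxS]⟩ ⟨y, by simp [hyT]⟩ := hxy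
  exact ⟨y, hyT, hsx.trans hxy'.reachable⟩

lemma reachable_induce_of_reachable_induce_union {A S T : Finset V} (hTA : T ⊆ A)
    (hST : ∀ s ∈ S, ∀ a ∈ A, G.Adj s a → a ∈ T)
    (hTT : ∀ t₁ t₂ (h₁ : t₁ ∈ T) (h₂ : t₂ ∈ T),
      (G.induce ↑(S ∪ T)).Reachable ⟨t₁, by simp [h₁]⟩ ⟨t₂, by simp [h₂]⟩ →
      (G.induce ↑A).Reachable ⟨t₁, hTA h₁⟩ ⟨t₂, hTA h₂⟩)
    {a b : V} (ha : a ∈ A) (hb : b ∈ A)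
    (h : (G.induce ↑(A ∪ S)).Reachable ⟨a, by simp [ha]⟩ ⟨b, by simp [hb]⟩) :
    (G.induce ↑A).Reachable ⟨a, ha⟩ ⟨b, hb⟩ := by
  -- Invariant along a walk ending at `b`: a vertex of `S` outside `A` first reaches `T` within
  -- `S ∪ T`, and from there `b` within `A`.
  let Q : V → Prop := fun x =>
    (∀ hx : x ∈ A, (G.induce ↑A).Reachable ⟨x, hx⟩ ⟨b, hb⟩) ∧
    (∀ hx : x ∈ S, x ∉ A → ∃ t, ∃ ht : t ∈ T,
      (G.induce ↑(S ∪ T)).Reachable ⟨x, by simp [hx]⟩ ⟨t, by simp [ht]⟩ ∧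
      (G.induce ↑A).Reachable ⟨t, hTA ht⟩ ⟨b, hb⟩)
  have step : ∀ x z, x ∈ A ∪ S → z ∈ A ∪ S → G.Adj x z → Q z → Q x := by
    intro x z hx hz hxz ⟨hzA, hzS⟩
    refine ⟨fun hxA => ?_, fun hxS hxA => ?_⟩
    · by_cases hzA' : z ∈ A
      · exact (show (G.induce ↑A).Adj ⟨x, hxA⟩ ⟨z, hzA'⟩ from hxz).reachable.trans (hzA hzA')
      · have hzS' : z ∈ S := (mem_union.1 hz).resolve_left hzA'
        have hxT : x ∈ T := hST z hzS' x hxA hxz.symm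
        obtain ⟨t, ht, hzt, htb⟩ := hzS hzS' hzA'
        have hxz' : (G.induce ↑(S ∪ T)).Adj ⟨x, by simp [hxT]⟩ ⟨z, by simp [hzS']⟩ := hxz
        exact (hTT x t hxT ht (hxz'.reachable.trans hzt)).trans htb
    · have hxz' : ∀ hz' : z ∈ ↑(S ∪ T),
          (G.induce ↑(S ∪ T)).Adj ⟨x, by simp [hxS]⟩ ⟨z, hz'⟩ := fun _ => hxz
      by_cases hzA' : z ∈ A
      · have hzT : z ∈ T := hST x hxS z hzA' hxz
        exact ⟨z, hzT, (hxz' (by simp [hzT])).reachable, hzA hzA'⟩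
      · have hzS' : z ∈ S := (mem_union.1 hz).resolve_left hzA'
        obtain ⟨t, ht, hzt, htb⟩ := hzS hzS' hzA'
        exact ⟨t, ht, (hxz' (by simp [hzS'])).reachable.trans hzt, htb⟩
  have walk : ∀ {x y : ↥(↑(A ∪ S) : Set V)}, (G.induce ↑(A ∪ S)).Walk x y →
      Q y.1 → Q x.1 := by
    intro x y p
    induction p with
    | nil => exact id
    | @cons u v _ hadj _ ih => exact fun hw => step u v u.2 v.2 hadj (ih hw)
  obtain ⟨p⟩ := h
  exact (walk p ⟨fun _ => Reachable.refl _, fun _ hbA => absurd hb hbA⟩).1 ha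

lemma isConnSet_union_iff {A S T : Finset V} (hTA : T ⊆ A) (hT : T.Nonempty)
    (hS : ∀ s (hs : s ∈ S), ∃ t, ∃ ht : t ∈ T,
      (G.induce ↑(S ∪ T)).Reachable ⟨s, by simp [hs]⟩ ⟨t, by simp [ht]⟩)
    (hST : ∀ s ∈ S, ∀ a ∈ A, G.Adj s a → a ∈ T)
    (hTT : ∀ t₁ t₂ (h₁ : t₁ ∈ T) (h₂ : t₂ ∈ T),
      (G.induce ↑(S ∪ T)).Reachable ⟨t₁, by simp [h₁]⟩ ⟨t₂, by simp [h₂]⟩ →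
      (G.induce ↑A).Reachable ⟨t₁, hTA h₁⟩ ⟨t₂, hTA h₂⟩) :
    IsConnSet G (A ∪ S) ↔ IsConnSet G A := by
  obtain ⟨t₀, ht₀⟩ := hT
  constructor
  · rintro ⟨-, hconn⟩
    refine ⟨⟨t₀, hTA ht₀⟩, (connected_iff_exists_forall_reachable _).2
      ⟨⟨t₀, hTA ht₀⟩, fun ⟨a, ha⟩ => ?_⟩⟩
    exact reachable_induce_of_reachable_induce_union hTA hST hTT (hTA ht₀) ha
      (hconn.preconnected _ _)
  · rintro ⟨hne, hconn⟩
    have hA : ∀ a (ha : a ∈ A), (G.induce ↑(A ∪ S)).Reachable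
        ⟨t₀, by simp [hTA ht₀]⟩ ⟨a, by simp [ha]⟩ := fun a ha =>
      Reachable.induce_mono le_rfl (coe_subset.2 subset_union_left)
        (hconn.preconnected ⟨t₀, hTA ht₀⟩ ⟨a, ha⟩)
    refine ⟨hne.mono subset_union_left, (connected_iff_exists_forall_reachable _).2
      ⟨⟨t₀, by simp [hTA ht₀]⟩, fun ⟨w, hw⟩ => ?_⟩⟩
    rcases mem_union.1 hw with hwA | hwS
    · exact hA w hwA
    · obtain ⟨t, ht, hwt⟩ := hS w hwS
      exact (hA t (hTA ht)).trans (Reachable.induce_mono le_rfl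
        (coe_subset.2 (union_subset subset_union_right (hTA.trans subset_union_left))) hwt).symm

end SimpleGraph

section Columns

variable {α β : Type*} [DecidableEq β]

lemma filter_snd_eq_of_forall {X : Finset (α × β)} {c : β} (hX : ∀ p ∈ X, p.2 = c) (j : β) :
    X.filter (·.2 = j) = if j = c then X else ∅ := by
  split_ifs with hj
  · exact filter_true_of_mem fun p hp => (hX p hp).trans hj.symm
  · exact filter_false_of_mem fun p hp h => hj (h.symm.trans (hX p hp))

lemma forall_filter_snd_eq_iff_of_forall {X C : Finset (α × β)} {c : β}
    (hX : ∀ p ∈ X, p.2 = c) (hXne : X.Nonempty) :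
    (∀ j, (X.filter (·.2 = j)).Nonempty → C.filter (·.2 = j) = X.filter (·.2 = j)) ↔
      C.filter (·.2 = c) = X := by
  simp only [filter_snd_eq_of_forall hX]
  refine ⟨fun h => by simpa using h c (by simpa using hXne), fun h j hj => ?_⟩
  split_ifs at hj ⊢ with hjc
  · exact hjc ▸ h
  · exact absurd hj (by simp)

lemma forall_filter_snd_eq_iff_of_forall_union [DecidableEq α] {S T C : Finset (α × β)} {c d : β}
    (hcd : c ≠ d) (hS : ∀ p ∈ S, p.2 = c) (hT : ∀ p ∈ T, p.2 = d)
    (hSne : S.Nonempty) (hTne : T.Nonempty) :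
    (∀ j, ((S ∪ T).filter (·.2 = j)).Nonempty →
        C.filter (·.2 = j) = (S ∪ T).filter (·.2 = j)) ↔
      C.filter (·.2 = c) = S ∧ C.filter (·.2 = d) = T := by
  simp only [filter_union, filter_snd_eq_of_forall hS, filter_snd_eq_of_forall hT]
  refine ⟨fun h => ⟨by simpa [hcd] using h c (by simpa [hcd] using hSne),
    by simpa [hcd.symm] using h d (by simpa [hcd.symm] using hTne)⟩, fun ⟨h₁, h₂⟩ j hj => ?_⟩
  by_cases hjc : j = c
  · subst hjc; simpa [hcd] using h₁
  · by_cases hjd : j = d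
    · subst hjd; simpa [hjc] using h₂
    · simp [hjc, hjd] at hj

end Columns

section Grid

variable {m k : ℕ}

def castSuccCol (m k : ℕ) : Fin m × Fin (k + 1) ↪ Fin m × Fin (k + 2) :=
  (Function.Embedding.refl _).prodMap Fin.castSuccEmb

def boxProdCastSucc (H : SimpleGraph (Fin m)) (k : ℕ) :
    (H □ pathGraph (k + 1)) ↪g (H □ pathGraph (k + 2)) where
  toEmbedding := castSuccCol m k
  map_rel_iff' := by
    intro x y
    simp [castSuccCol, boxProd_adj, pathGraph_adj, Fin.ext_iff]

lemma isConnSet_map_castSuccCol_iff (H : SimpleGraph (Fin m))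
    (B : Finset (Fin m × Fin (k + 1))) :
    IsConnSet (H □ pathGraph (k + 2)) (B.map (castSuccCol m k)) ↔
      IsConnSet (H □ pathGraph (k + 1)) B := by
  rw [IsConnSet, IsConnSet, map_nonempty, coe_map]
  exact and_congr_right fun _ =>
    ((boxProdCastSucc H k).induceImage (B : Set (Fin m × Fin (k + 1)))).connected_iff.symm

lemma eq_of_boxProd_pathGraph_adj_last {H : SimpleGraph (Fin m)} {x y : Fin m × Fin (k + 2)}
    (h : (H □ pathGraph (k + 2)).Adj x y) (hx : x.2 = Fin.last (k + 1))
    (hy : y.2 ≠ Fin.last (k + 1)) : y = (x.1, (Fin.last k).castSucc) := by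
  rw [boxProd_adj, pathGraph_adj] at h
  rcases h with ⟨-, h⟩ | ⟨h, h'⟩
  · exact absurd (h ▸ hx) hy
  · simp only [Fin.ext_iff, Fin.val_last, ne_eq] at hx hy
    exact Prod.ext h'.symm (Fin.ext (by simp; omega))

variable {S T A : Finset (Fin m × Fin (k + 2))}

lemma isConnSet_boxProd_union_iff {H : SimpleGraph (Fin m)} (hH : cycleRow m ≤ H)
    (hS : ∀ p ∈ S, p.2 = Fin.last (k + 1)) (hA : ∀ p ∈ A, p.2 ≠ Fin.last (k + 1))
    (hAT : T = A.filter (·.2 = (Fin.last k).castSucc)) (hT : T.Nonempty)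
    (hcomp : ∀ R, IsCompOf (cycleRow m □ pathGraph (k + 2)) R S →
      ¬ IsCompOf (cycleRow m □ pathGraph (k + 2)) R (S ∪ T))
    (hTT : ∀ t₁ t₂ (h₁ : t₁ ∈ T) (h₂ : t₂ ∈ T),
      ((H □ pathGraph (k + 2)).induce ↑(S ∪ T)).Reachable ⟨t₁, by simp [h₁]⟩
        ⟨t₂, by simp [h₂]⟩ →
      ((H □ pathGraph (k + 2)).induce ↑A).Reachable ⟨t₁, (mem_filter.1 (hAT ▸ h₁)).1⟩
        ⟨t₂, (mem_filter.1 (hAT ▸ h₂)).1⟩) :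
    IsConnSet (H □ pathGraph (k + 2)) (A ∪ S) ↔ IsConnSet (H □ pathGraph (k + 2)) A := by
  have hTA : T ⊆ A := hAT ▸ filter_subset _ A
  refine isConnSet_union_iff hTA hT (fun s hs => ?_) (fun s hs a ha hsa => ?_) hTT
  · obtain ⟨t, ht, hst⟩ := exists_reachable_of_forall_not_isCompOf hcomp hs
    exact ⟨t, ht, Reachable.induce_mono (boxProd_mono_left hH _) subset_rfl hst⟩
  · have ha' := eq_of_boxProd_pathGraph_adj_last hsa (hS s hs) (hA a ha)
    exact hAT ▸ mem_filter.2 ⟨ha, by rw [ha']⟩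

lemma isConnSet_top_boxProd_union_iff
    (hS : ∀ p ∈ S, p.2 = Fin.last (k + 1)) (hA : ∀ p ∈ A, p.2 ≠ Fin.last (k + 1))
    (hAT : T = A.filter (·.2 = (Fin.last k).castSucc)) (hT : T.Nonempty)
    (hcomp : ∀ R, IsCompOf (cycleRow m □ pathGraph (k + 2)) R S →
      ¬ IsCompOf (cycleRow m □ pathGraph (k + 2)) R (S ∪ T)) :
    IsConnSet ((⊤ : SimpleGraph (Fin m)) □ pathGraph (k + 2)) (A ∪ S) ↔
      IsConnSet ((⊤ : SimpleGraph (Fin m)) □ pathGraph (k + 2)) A := by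
  refine isConnSet_boxProd_union_iff le_top hS hA hAT hT hcomp fun t₁ t₂ h₁ h₂ _ => ?_
  -- `T` lies in a single column, which is a clique of `K_m × P_n`.
  rw [hAT, mem_filter] at h₁ h₂
  by_cases h : t₁ = t₂
  · subst h; rfl
  · refine Adj.reachable (show ((⊤ : SimpleGraph (Fin m)) □ pathGraph (k + 2)).Adj t₁ t₂ from ?_)
    rw [boxProd_adj]
    exact Or.inl ⟨fun h' => h (Prod.ext h' (h₁.2.trans h₂.2.symm)), h₁.2.trans h₂.2.symm⟩

lemma isConnSet_cycleRow_boxProd_union_iff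
    (hS : ∀ p ∈ S, p.2 = Fin.last (k + 1)) (hA : ∀ p ∈ A, p.2 ≠ Fin.last (k + 1))
    (hAT : T = A.filter (·.2 = (Fin.last k).castSucc)) (hT : T.Nonempty)
    (hcomp : ∀ R, IsCompOf (cycleRow m □ pathGraph (k + 2)) R S →
      ¬ IsCompOf (cycleRow m □ pathGraph (k + 2)) R (S ∪ T))
    (hk : kcomp (cycleRow m □ pathGraph (k + 2)) (S ∪ T) =
      kcomp (cycleRow m □ pathGraph (k + 2)) T) :
    IsConnSet (cycleRow m □ pathGraph (k + 2)) (A ∪ S) ↔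
      IsConnSet (cycleRow m □ pathGraph (k + 2)) A := by
  refine isConnSet_boxProd_union_iff le_rfl hS hA hAT hT hcomp fun t₁ t₂ h₁ h₂ h => ?_
  have hreach : ∀ v (hv : v ∈ S ∪ T), ∃ u, ∃ hu : u ∈ T,
      ((cycleRow m □ pathGraph (k + 2)).induce ↑(S ∪ T)).Reachable ⟨v, hv⟩
        ⟨u, subset_union_right hu⟩ := by
    intro v hv
    rcases mem_union.1 hv with hvS | hvT
    · exact exists_reachable_of_forall_not_isCompOf hcomp hvS
    · exact ⟨v, hvT, Reachable.refl _⟩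
  exact Reachable.induce_mono le_rfl (coe_subset.2 (hAT ▸ filter_subset _ A))
    (reachable_induce_of_kcomp_eq subset_union_right hreach hk h₁ h₂ h)

lemma snd_ne_last_of_mem_map_castSuccCol {B : Finset (Fin m × Fin (k + 1))} :
    ∀ p ∈ B.map (castSuccCol m k), p.2 ≠ Fin.last (k + 1) := by
  simp only [mem_map]
  rintro _ ⟨p, -, rfl⟩
  exact Fin.castSucc_ne_last _

lemma filter_map_castSuccCol (B : Finset (Fin m × Fin (k + 1))) (j : Fin (k + 1)) :
    (B.map (castSuccCol m k)).filter (·.2 = j.castSucc) =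
      (B.filter (·.2 = j)).map (castSuccCol m k) := by
  rw [filter_map]
  exact congrArg _ (filter_congr fun p _ => Fin.castSucc_inj)

lemma filter_map_castSuccCol_union_last (hS : ∀ p ∈ S, p.2 = Fin.last (k + 1))
    (B : Finset (Fin m × Fin (k + 1))) :
    (B.map (castSuccCol m k) ∪ S).filter (·.2 = Fin.last (k + 1)) = S := by
  rw [filter_union, filter_false_of_mem snd_ne_last_of_mem_map_castSuccCol,
    filter_true_of_mem hS, empty_union]

lemma filter_map_castSuccCol_union_castSucc (hS : ∀ p ∈ S, p.2 = Fin.last (k + 1))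
    (B : Finset (Fin m × Fin (k + 1))) (j : Fin (k + 1)) :
    (B.map (castSuccCol m k) ∪ S).filter (·.2 = j.castSucc) =
      (B.filter (·.2 = j)).map (castSuccCol m k) := by
  rw [filter_union, filter_map_castSuccCol, filter_false_of_mem (s := S) fun p hp h =>
    Fin.castSucc_ne_last _ (h.symm.trans (hS p hp)), union_empty]

lemma map_castSuccCol_union_injective (hS : ∀ p ∈ S, p.2 = Fin.last (k + 1)) :
    Function.Injective fun B : Finset (Fin m × Fin (k + 1)) => B.map (castSuccCol m k) ∪ S := by
  intro B₁ B₂ h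
  have hdisj : ∀ B : Finset (Fin m × Fin (k + 1)), Disjoint (B.map (castSuccCol m k)) S :=
    fun B => disjoint_left.2 fun p hp hpS => snd_ne_last_of_mem_map_castSuccCol p hp (hS p hpS)
  apply Finset.map_injective (castSuccCol m k)
  rw [← union_sdiff_cancel_right (hdisj B₁), ← union_sdiff_cancel_right (hdisj B₂)]
  exact congrArg (· \ S) h

lemma exists_map_castSuccCol_union_eq {C : Finset (Fin m × Fin (k + 2))}
    (hCS : C.filter (·.2 = Fin.last (k + 1)) = S) :
    ∃ B : Finset (Fin m × Fin (k + 1)), B.map (castSuccCol m k) ∪ S = C := by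
  have hsub : C.filter (¬ ·.2 = Fin.last (k + 1)) ⊆ univ.map (castSuccCol m k) := fun p hp => by
    obtain ⟨j, hj⟩ := (Fin.eq_castSucc_or_eq_last p.2).resolve_right (mem_filter.1 hp).2
    exact mem_map.2 ⟨(p.1, j), mem_univ _, Prod.ext rfl hj.symm⟩
  obtain ⟨B, -, hB⟩ := subset_map_iff.1 hsub
  exact ⟨B, by rw [← hB, ← hCS, union_comm, filter_union_filter_not_eq]⟩

lemma map_castSuccCol_image_fst (hT : ∀ p ∈ T, p.2 = (Fin.last k).castSucc) :
    ((T.image Prod.fst).image (·, Fin.last k)).map (castSuccCol m k) = T := by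
  rw [map_eq_image, image_image, image_image]
  conv_rhs => rw [← image_id (s := T)]
  exact image_congr fun p hp => Prod.ext rfl (hT p hp).symm

lemma map_castSuccCol_union_mem_Cmn'_iff {B : Finset (Fin m × Fin (k + 1))}
    (hS : ∀ p ∈ S, p.2 = Fin.last (k + 1)) (hSne : S.Nonempty)
    (hBT : (B.filter (·.2 = Fin.last k)).map (castSuccCol m k) = T) (hT : T.Nonempty)
    (hcomp : ∀ R, IsCompOf (cycleRow m □ pathGraph (k + 2)) R S →
      ¬ IsCompOf (cycleRow m □ pathGraph (k + 2)) R (S ∪ T))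
    (hk : kcomp (cycleRow m □ pathGraph (k + 2)) (S ∪ T) =
      kcomp (cycleRow m □ pathGraph (k + 2)) T) :
    B.map (castSuccCol m k) ∪ S ∈ Cmn' m (k + 2) ↔ B ∈ Cmn' m (k + 1) := by
  rw [← filter_map_castSuccCol] at hBT
  have hcols : (∀ j, ((B.map (castSuccCol m k) ∪ S).filter (·.2 = j)).Nonempty) ↔
      ∀ j, (B.filter (·.2 = j)).Nonempty := by
    simp [Fin.forall_fin_succ', filter_map_castSuccCol_union_castSucc hS,
      filter_map_castSuccCol_union_last hS, hSne]
  simp only [Cmn', Set.mem_ofPred_eq]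
  rw [isConnSet_top_boxProd_union_iff hS snd_ne_last_of_mem_map_castSuccCol hBT.symm hT hcomp,
    isConnSet_cycleRow_boxProd_union_iff hS snd_ne_last_of_mem_map_castSuccCol hBT.symm hT hcomp
      hk, isConnSet_map_castSuccCol_iff, isConnSet_map_castSuccCol_iff, hcols]

lemma N'_union_eq (hS : ∀ p ∈ S, p.2 = Fin.last (k + 1))
    (hT : ∀ p ∈ T, p.2 = (Fin.last k).castSucc) (hSne : S.Nonempty) (hTne : T.Nonempty)
    (hcomp : ∀ R, IsCompOf (cycleRow m □ pathGraph (k + 2)) R S →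
      ¬ IsCompOf (cycleRow m □ pathGraph (k + 2)) R (S ∪ T))
    (hk : kcomp (cycleRow m □ pathGraph (k + 2)) (S ∪ T) =
      kcomp (cycleRow m □ pathGraph (k + 2)) T) :
    N' m (k + 2) (S ∪ T) = N' m (k + 1) ((T.image Prod.fst).image (·, Fin.last k)) := by
  set X := (T.image Prod.fst).image (·, Fin.last k)
  have hX : ∀ p ∈ X, p.2 = Fin.last k := by
    simp only [X, mem_image]
    rintro _ ⟨_, _, rfl⟩
    rfl
  have hXT : ∀ B : Finset (Fin m × Fin (k + 1)), B.filter (·.2 = Fin.last k) = X ↔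
      (B.filter (·.2 = Fin.last k)).map (castSuccCol m k) = T := fun B => by
    rw [← map_castSuccCol_image_fst hT]
    exact (Finset.map_injective _).eq_iff.symm
  unfold N'
  rw [← Set.ncard_image_of_injective _ (map_castSuccCol_union_injective hS)]
  congr 1
  ext C
  simp only [Set.mem_image, Set.mem_ofPred_eq,
    forall_filter_snd_eq_iff_of_forall hX ((hTne.image _).image _),
    forall_filter_snd_eq_iff_of_forall_union (Fin.castSucc_ne_last _).symm hS hT hSne hTne]
  constructor
  · rintro ⟨hC, hCS, hCT⟩
    obtain ⟨B, rfl⟩ := exists_map_castSuccCol_union_eq hCS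
    rw [filter_map_castSuccCol_union_castSucc hS] at hCT
    exact ⟨B, ⟨(map_castSuccCol_union_mem_Cmn'_iff hS hSne hCT hTne hcomp hk).1 hC,
      (hXT B).2 hCT⟩, rfl⟩
  · rintro ⟨B, ⟨hB, hBX⟩, rfl⟩
    have hBT := (hXT B).1 hBX
    exact ⟨(map_castSuccCol_union_mem_Cmn'_iff hS hSne hBT hTne hcomp hk).2 hB,
      filter_map_castSuccCol_union_last hS B,
      (filter_map_castSuccCol_union_castSucc hS B _).trans hBT⟩

end Grid

/-- Let `m ≥ 3`, `n ≥ 3` and `C ∈ C'_{m,n}` with `C∩I_n = S_n` and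
`C∩I_{n−1} = T_{n−1}`. If no connected component of `(C_m×P_n)[S_n]` is a connected
component of `(C_m×P_n)[S_n ∪ T_{n−1}]`, and `(C_m×P_n)[S_n ∪ T_{n−1}]` has the same
number of connected components as `(C_m×P_n)[T_{n−1}]`, then
`N'(K_m×P_n; S_n∪T_{n−1}) = N'(K_m×P_{n−1}; T_{n−1})`. -/
theorem statement14 (m n : ℕ) (hn : 3 ≤ n)
    (C : Finset (Fin m × Fin n)) (hC : C ∈ Cmn' m n)
    (Sn Tn1 : Finset (Fin m × Fin n))
    (hSn : Sn = C.filter (fun p => p.2 = (⟨n - 1, by omega⟩ : Fin n)))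
    (hTn1 : Tn1 = C.filter (fun p => p.2 = (⟨n - 2, by omega⟩ : Fin n)))
    (hcomp : ∀ R, IsCompOf (cycleRow m □ pathGraph n) R Sn →
      ¬ IsCompOf (cycleRow m □ pathGraph n) R (Sn ∪ Tn1))
    (hk : kcomp (cycleRow m □ pathGraph n) (Sn ∪ Tn1) =
      kcomp (cycleRow m □ pathGraph n) Tn1) :
    N' m n (Sn ∪ Tn1) =
      N' m (n - 1)
        ((Tn1.image Prod.fst).image (fun q => (q, (⟨n - 2, by omega⟩ : Fin (n - 1))))) := by
  obtain ⟨k, rfl⟩ : ∃ k, n = k + 2 := ⟨n - 2, by omega⟩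
  subst hSn hTn1
  exact N'_union_eq (fun p hp => (mem_filter.1 hp).2) (fun p hp => (mem_filter.1 hp).2)
    (hC.2.2 _) (hC.2.2 _) hcomp hk
end
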